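/- arXiv:2307.00376 — 13 statements merged into one kernel-verified Lean document; each statement's English description precedes it below -/
import Mathlib

section
/- Let G be a simple graph on vertex set {1,…,n}, let A ∈ S(G), and let x be a nonzero vector with Ax = 0. Then the support of x (the set of indices i with x_i ≠ 0) is a fort of G. -/
open Matrix
open scoped Classical

/-- `A ∈ S(G)`: real symmetric matrices whose off-diagonal zero/nonzero pattern
is given by the adjacencies of `G`. -/
def SMatrixOf {V : Type*} [Fintype V] (G : SimpleGraph V) (A : Matrix V V ℝ) : Prop :=
  A.IsSymm ∧ ∀ i j, i ≠ j → (A i j ≠ 0 ↔ G.Adj i j)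

/-- A fort of `G`: a nonempty vertex set `F` such that no vertex outside `F`
is adjacent to exactly one vertex of `F`. -/
def IsFort {V : Type*} (G : SimpleGraph V) (F : Set V) : Prop :=
  F.Nonempty ∧ ∀ v ∉ F, ¬ ∃! w, w ∈ F ∧ G.Adj v w

/-- The spark of a square real matrix: the minimum number of nonzero coordinates
of a nonzero null vector; `card + 1` if the matrix is nonsingular. -/
noncomputable def Matrix.spark {V : Type*} [Fintype V] (A : Matrix V V ℝ) : ℕ :=
  if ∃ x : V → ℝ, x ≠ 0 ∧ A.mulVec x = 0 then
    sInf {k | ∃ x : V → ℝ, x ≠ 0 ∧ A.mulVec x = 0 ∧ {i | x i ≠ 0}.ncard = k}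
  else Fintype.card V + 1

/-- The spark of a graph. -/
noncomputable def sparkG {V : Type*} [Fintype V] (G : SimpleGraph V) : ℕ :=
  sInf {s | ∃ A, SMatrixOf G A ∧ A.spark = s}

/-- minimum degree -/
noncomputable def minDeg {V : Type*} (G : SimpleGraph V) : ℕ :=
  sInf {d | ∃ v, (G.neighborSet v).ncard = d}

/-- `G` is `k`-connected: more than `k` vertices, and removing fewer than `k`
vertices leaves a connected graph. -/
def IsKConnected {V : Type*} [Fintype V] (G : SimpleGraph V) (k : ℕ) : Prop :=
  k < Fintype.card V ∧ ∀ S : Set V, S.ncard < k → (G.induce Sᶜ).Connected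

/-- vertex connectivity -/
noncomputable def kappa {V : Type*} [Fintype V] (G : SimpleGraph V) : ℕ :=
  sSup {k | IsKConnected G k}

/-- minimum rank of a graph -/
noncomputable def mr {V : Type*} [Fintype V] (G : SimpleGraph V) : ℕ :=
  sInf {r | ∃ A, SMatrixOf G A ∧ A.rank = r}

/-- minimum semidefinite rank of a graph -/
noncomputable def mrPlus {V : Type*} [Fintype V] (G : SimpleGraph V) : ℕ :=
  sInf {r | ∃ A, SMatrixOf G A ∧ A.PosSemidef ∧ A.rank = r}

/-- nullity of a square matrix -/
noncomputable def nullity {V : Type*} [Fintype V] (A : Matrix V V ℝ) : ℕ :=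
  Module.finrank ℝ (LinearMap.ker A.mulVecLin)

/-- A matrix is generic if every square submatrix is nonsingular. -/
def IsGeneric {m p : Type*} (X : Matrix m p ℝ) : Prop :=
  ∀ (r : ℕ) (f : Fin r → m) (g : Fin r → p),
    Function.Injective f → Function.Injective g → (X.submatrix f g).det ≠ 0

/-- generic nullity of a matrix -/
noncomputable def GN {n : ℕ} (A : Matrix (Fin n) (Fin n) ℝ) : ℕ :=
  sSup {k | ∃ X : Matrix (Fin n) (Fin k) ℝ, IsGeneric X ∧ A * X = 0}

/-- maximum generic nullity of a graph -/
noncomputable def GM {n : ℕ} (G : SimpleGraph (Fin n)) : ℕ :=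
  sSup {m | ∃ A, SMatrixOf G A ∧ GN A = m}

/- A vertex `v` outside the support sees only its neighbours in row `v` of `A x = 0`; with a single
neighbour `w` in the support the row reduces to `A v w * x w = 0`, forcing `x w = 0`. -/

namespace SMatrixOf

variable {V : Type*} [Fintype V] {G : SimpleGraph V} {A : Matrix V V ℝ}

theorem mulVec_apply_eq_of_unique_adj (hA : SMatrixOf G A) {x : V → ℝ} {v w : V}
    (hv : x v = 0) (huniq : ∀ j, x j ≠ 0 ∧ G.Adj v j → j = w) :
    (A *ᵥ x) v = A v w * x w := by
  refine Finset.sum_eq_single w (fun j _ hjw => ?_) (by simp)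
  by_cases hvj : v = j
  · simp [← hvj, hv]
  by_contra hne
  obtain ⟨hAvj, hxj⟩ := mul_ne_zero_iff.mp hne
  exact hjw (huniq j ⟨hxj, (hA.2 v j hvj).mp hAvj⟩)

theorem isFort_support_of_mulVec_eq_zero (hA : SMatrixOf G A) {x : V → ℝ} (hx : x ≠ 0)
    (hAx : A *ᵥ x = 0) : IsFort G {i | x i ≠ 0} := by
  refine ⟨Function.ne_iff.mp hx, fun v hv ⟨w, ⟨hxw, hvw⟩, huniq⟩ => hxw ?_⟩
  have hrow : A v w * x w = 0 := by
    rw [← hA.mulVec_apply_eq_of_unique_adj (not_not.mp hv) huniq, hAx, Pi.zero_apply]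
  exact (mul_eq_zero.mp hrow).resolve_left ((hA.2 v w (G.ne_of_adj hvw)).mpr hvw)

end SMatrixOf

/-- the support of a nonzero null vector of `A ∈ S(G)` is a fort of `G`. -/
theorem stmt0 {n : ℕ} (G : SimpleGraph (Fin n)) (A : Matrix (Fin n) (Fin n) ℝ)
    (hA : SMatrixOf G A) (x : Fin n → ℝ) (hx : x ≠ 0) (hAx : A.mulVec x = 0) :
    IsFort G {i | x i ≠ 0} :=
  hA.isFort_support_of_mulVec_eq_zero hx hAx
end

section
/- Let G be a simple graph on vertex set {1,…,n}, let F be a fort of G, and let x be any vector whose support is exactly F. Then there exists a matrix A ∈ S(G) with Ax = 0. -/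
open Matrix
open scoped Classical

lemma exists_coeffs {ι : Type*} [Fintype ι] [DecidableEq ι] (T : Finset ι) (x : ι → ℝ)
    (hT : ∀ j ∈ T, x j ≠ 0) (hcard : T.card ≠ 1) :
    ∃ c : ι → ℝ, (∀ w, c w ≠ 0 ↔ w ∈ T) ∧ ∑ w, c w * x w = 0 := by
  rcases Finset.eq_empty_or_nonempty T with hT0 | hT0
  · exact ⟨0, by simp [hT0], by simp⟩
  have h2 : 1 < T.card := by
    have := Finset.card_pos.mpr hT0
    omega
  obtain ⟨w1, hw1, w2, hw2, hne⟩ := Finset.one_lt_card.mp h2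
  set T' : Finset ι := (T.erase w1).erase w2 with hT'
  set S : ℝ := ∑ j ∈ T', x j with hS
  have hx1 : x w1 ≠ 0 := hT w1 hw1
  have hx2 : x w2 ≠ 0 := hT w2 hw2
  set a : ℝ := if x w1 + S = 0 then 2 else 1 with ha
  have ha0 : a ≠ 0 := by
    rw [ha]; split <;> norm_num
  have hnum : a * x w1 + S ≠ 0 := by
    rw [ha]; split
    · rename_i h; intro hc
      have : x w1 = 0 := by linarith
      exact hx1 this
    · rename_i h; intro hc; apply h; linarith
  set b : ℝ := -(a * x w1 + S) / x w2 with hb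
  have hb0 : b ≠ 0 := by
    rw [hb]
    exact div_ne_zero (neg_ne_zero.mpr hnum) hx2
  refine ⟨fun w => if w = w1 then a else if w = w2 then b else if w ∈ T then 1 else 0,
    fun w => ?_, ?_⟩
  · by_cases h1 : w = w1
    · simp [h1, ha0, hw1]
    by_cases h2' : w = w2
    · simp [h1, h2', hb0, hw2, hne.symm]
    by_cases h3 : w ∈ T <;> simp [h1, h2', h3]
  · have hzero : ∀ w ∈ (Finset.univ : Finset ι), w ∉ T →
        (if w = w1 then a else if w = w2 then b else if w ∈ T then 1 else 0) * x w = 0 := by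
      intro w _ hw
      have h1 : w ≠ w1 := fun h => hw (h ▸ hw1)
      have h2' : w ≠ w2 := fun h => hw (h ▸ hw2)
      simp [h1, h2', hw]
    rw [← Finset.sum_subset (Finset.subset_univ T) hzero]
    have hw2' : w2 ∈ T.erase w1 := Finset.mem_erase.mpr ⟨hne.symm, hw2⟩
    rw [← Finset.add_sum_erase _ _ hw1, ← Finset.add_sum_erase _ _ hw2']
    have hrest : ∀ j ∈ T', (if j = w1 then a else if j = w2 then b else if j ∈ T then 1 else 0)
        * x j = x j := by
      intro j hj
      rw [hT'] at hj
      have h2' : j ≠ w2 := (Finset.mem_erase.mp hj).1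
      have h1 : j ≠ w1 := (Finset.mem_erase.mp (Finset.mem_erase.mp hj).2).1
      have h3 : j ∈ T := (Finset.mem_erase.mp (Finset.mem_erase.mp hj).2).2
      simp [h1, h2', h3]
    rw [Finset.sum_congr rfl hrest]
    simp only [if_pos rfl, if_neg hne.symm, ← hS]
    rw [hb]
    simp only [if_true]
    field_simp
    ring

/-- for any fort `F` and vector `x` supported exactly on `F`,
some `A ∈ S(G)` has `x` as a null vector. -/
theorem stmt1 {n : ℕ} (G : SimpleGraph (Fin n)) (F : Set (Fin n)) (hF : IsFort G F)
    (x : Fin n → ℝ) (hx : {i | x i ≠ 0} = F) :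
    ∃ A : Matrix (Fin n) (Fin n) ℝ, SMatrixOf G A ∧ A.mulVec x = 0 := by
  classical
  have hxF : ∀ v, x v ≠ 0 ↔ v ∈ F := fun v => by
    rw [← hx]; rfl
  have hchoice : ∀ v : Fin n, ∃ c : Fin n → ℝ,
      (∀ w, c w ≠ 0 ↔ (v ∉ F ∧ w ∈ F ∧ G.Adj v w)) ∧ ∑ w, c w * x w = 0 := by
    intro v
    by_cases hv : v ∈ F
    · exact ⟨0, by simp [hv], by simp⟩
    · set T : Finset (Fin n) := Finset.univ.filter (fun w => w ∈ F ∧ G.Adj v w) with hTdef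
      have hmemT : ∀ w, w ∈ T ↔ (w ∈ F ∧ G.Adj v w) := by
        intro w; simp [hTdef]
      have hcard : T.card ≠ 1 := by
        intro h1
        obtain ⟨w, hw⟩ := Finset.card_eq_one.mp h1
        have hwT : w ∈ T := hw ▸ Finset.mem_singleton_self w
        refine hF.2 v hv ⟨w, (hmemT w).mp hwT, fun y hy => ?_⟩
        have : y ∈ T := (hmemT y).mpr hy
        rw [hw, Finset.mem_singleton] at this
        exact this
      have hx' : ∀ j ∈ T, x j ≠ 0 := fun j hj => (hxF j).mpr ((hmemT j).mp hj).1
      obtain ⟨c, hc1, hc2⟩ := exists_coeffs T x hx' hcard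
      exact ⟨c, fun w => by rw [hc1 w, hmemT w]; tauto, hc2⟩
  choose c hc1 hc2 using hchoice
  set B : Matrix (Fin n) (Fin n) ℝ := fun v w =>
    if v ∈ F then (if w ∈ F then (if G.Adj v w then 1 else 0) else c w v)
    else (if w ∈ F then c v w else (if G.Adj v w then 1 else 0)) with hB
  set d : Fin n → ℝ := fun v => if x v = 0 then 0 else -(∑ j, B v j * x j) / x v with hd
  refine ⟨B + Matrix.diagonal d, ⟨?_, ?_⟩, ?_⟩
  · -- symmetry
    have hBsymm : B.IsSymm := by
      ext v w
      rw [Matrix.transpose_apply]; simp only [hB]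
      by_cases hvF : v ∈ F <;> by_cases hwF : w ∈ F <;>
        simp [hvF, hwF, G.adj_comm v w]
    exact hBsymm.add (Matrix.isSymm_diagonal d)
  · -- pattern
    intro i j hij
    have hdiag : Matrix.diagonal d i j = 0 := Matrix.diagonal_apply_ne d hij
    rw [Matrix.add_apply, hdiag, add_zero]; simp only [hB]
    by_cases hiF : i ∈ F <;> by_cases hjF : j ∈ F
    · simp only [if_pos hiF, if_pos hjF]
      constructor
      · intro h; by_contra hadj; simp [hadj] at h
      · intro h; simp [h]
    · simp only [if_pos hiF, if_neg hjF]
      rw [hc1 j i]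
      constructor
      · rintro ⟨-, -, h⟩; exact h.symm
      · intro h; exact ⟨hjF, hiF, h.symm⟩
    · simp only [if_neg hiF, if_pos hjF]
      rw [hc1 i j]; tauto
    · simp only [if_neg hiF, if_neg hjF]
      constructor
      · intro h; by_contra hadj; simp [hadj] at h
      · intro h; simp [h]
  · -- null vector
    funext v
    rw [Matrix.add_mulVec]
    simp only [Pi.add_apply, Pi.zero_apply, Matrix.mulVec_diagonal]
    by_cases hvF : v ∈ F
    · have hxv : x v ≠ 0 := (hxF v).mpr hvF
      have : d v = -(∑ j, B v j * x j) / x v := by rw [hd]; simp [hxv]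
      rw [Matrix.mulVec, this]
      have : (B v) ⬝ᵥ x = ∑ j, B v j * x j := rfl
      rw [this]
      field_simp
      ring
    · have hxv : x v = 0 := by
        by_contra h; exact hvF ((hxF v).mp h)
      have hsum : ∑ j, B v j * x j = ∑ j, c v j * x j := by
        apply Finset.sum_congr rfl
        intro j _
        by_cases hjF : j ∈ F
        · simp [hB, hvF, hjF]
        · have hxj : x j = 0 := by
            by_contra h; exact hjF ((hxF j).mp h)
          simp [hxj]
      have : (B.mulVec x) v = ∑ j, B v j * x j := rfl
      rw [this, hsum, hc2 v, hxv, mul_zero, add_zero]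
end

section
/- Let G be a simple graph on vertex set {1,…,n} that has at least one fort (equivalently, some matrix in S(G) is singular). Then spark(G) equals the minimum cardinality of a fort of G. -/
open Matrix
open scoped Classical

lemma support_isFort {V : Type*} [Fintype V] {G : SimpleGraph V} {A : Matrix V V ℝ}
    (hA : SMatrixOf G A) {x : V → ℝ} (hx : x ≠ 0) (hAx : A.mulVec x = 0) :
    IsFort G {i | x i ≠ 0} := by
  constructor
  · by_contra hne
    apply hx
    funext i
    by_contra hi
    exact hne ⟨i, hi⟩
  · rintro v hv ⟨w, ⟨hwF, hwadj⟩, huniq⟩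
    have hxv : x v = 0 := by simpa using hv
    have hvw : v ≠ w := fun he => by rw [he] at hxv; exact hwF hxv
    have hsum : ∑ u, A v u * x u = 0 := congrFun hAx v
    rw [Finset.sum_eq_single w] at hsum
    · exact mul_ne_zero ((hA.2 v w hvw).mpr hwadj) hwF hsum
    · intro u _ huw
      by_cases hxu : x u = 0
      · rw [hxu, mul_zero]
      · by_cases huv : u = v
        · rw [huv, hxv, mul_zero]
        · have : ¬ G.Adj v u := fun hadj => huw (huniq u ⟨hxu, hadj⟩)
          have h0 : A v u = 0 := not_not.mp fun hne => this ((hA.2 v u (Ne.symm huv)).mp hne)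
          rw [h0, zero_mul]
    · intro hw; exact absurd (Finset.mem_univ w) hw

lemma fort_card_ne_one {V : Type*} [Fintype V] {G : SimpleGraph V} {F : Set V}
    (hF : IsFort G F) {v : V} (hv : v ∉ F) :
    (Finset.univ.filter (fun u => u ∈ F ∧ G.Adj v u)).card ≠ 1 := by
  intro hc
  obtain ⟨w, hw⟩ := Finset.card_eq_one.mp hc
  apply hF.2 v hv
  refine ⟨w, ?_, ?_⟩
  · have := hw ▸ Finset.mem_singleton_self w
    simpa [Finset.mem_filter] using (hw ▸ Finset.mem_singleton_self w : w ∈ Finset.univ.filter _)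
  · intro y hy
    have : y ∈ Finset.univ.filter (fun u => u ∈ F ∧ G.Adj v u) := by
      simp [Finset.mem_filter, hy.1, hy.2]
    rw [hw, Finset.mem_singleton] at this
    exact this

lemma exists_matrix_of_fort {V : Type*} [Fintype V] (G : SimpleGraph V) {F : Set V}
    (hF : IsFort G F) :
    ∃ A : Matrix V V ℝ, SMatrixOf G A ∧
      A.mulVec (fun i => if i ∈ F then (1:ℝ) else 0) = 0 := by
  set N : V → Finset V := fun v => Finset.univ.filter (fun u => u ∈ F ∧ G.Adj v u) with hN
  set d : V → ℕ := fun v => (N v).card with hd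
  set w0 : V → V := fun v => if h : (N v).Nonempty then h.choose else v with hw0
  have hw0mem : ∀ v, (N v).Nonempty → w0 v ∈ N v := by
    intro v h; simp only [hw0, dif_pos h]; exact h.choose_spec
  set c : V → V → ℝ := fun v u => if u = w0 v then 1 - (d v : ℝ) else 1 with hc
  -- for v ∉ F with a neighbor in F, d v ≥ 2
  have hd2 : ∀ v ∉ F, (N v).Nonempty → 2 ≤ d v := by
    intro v hv hne
    have h1 : d v ≠ 1 := fort_card_ne_one hF hv
    have h2 : 1 ≤ d v := Finset.card_pos.mpr hne
    omega
  have hcne : ∀ v ∉ F, (N v).Nonempty → ∀ u, c v u ≠ 0 := by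
    intro v hv hne u
    simp only [hc]
    split
    · have := hd2 v hv hne
      have : (2:ℝ) ≤ (d v : ℝ) := by exact_mod_cast this
      intro h; linarith
    · norm_num
  set B : V → V → ℝ := fun v w =>
    if v ∈ F then (if w ∈ F then 1 else c w v) else (if w ∈ F then c v w else 1) with hB
  set A : Matrix V V ℝ := fun v w =>
    if v = w then (if v ∈ F then -((d v : ℝ)) else 1)
    else if G.Adj v w then B v w else 0 with hA
  have hBne : ∀ v w, G.Adj v w → B v w ≠ 0 := by
    intro v w hadj
    simp only [hB]
    by_cases hvF : v ∈ F <;> by_cases hwF : w ∈ F <;> simp [hvF, hwF]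
    · -- v ∈ F, w ∉ F : c w v ≠ 0
      exact hcne w hwF ⟨v, by simp [hN, hvF, hadj.symm]⟩ v
    · exact hcne v hvF ⟨w, by simp [hN, hwF, hadj]⟩ w
  refine ⟨A, ⟨?_, ?_⟩, ?_⟩
  · -- symmetry
    ext v w
    simp only [Matrix.transpose_apply]
    simp only [hA]
    by_cases hvw : v = w
    · simp [hvw]
    · rw [if_neg hvw, if_neg (Ne.symm hvw)]
      by_cases hadj : G.Adj v w
      · rw [if_pos hadj, if_pos hadj.symm]
        simp only [hB]
        by_cases hvF : v ∈ F <;> by_cases hwF : w ∈ F <;> simp [hvF, hwF]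
      · rw [if_neg hadj, if_neg (fun h => hadj h.symm)]
  · -- pattern
    intro i j hij
    simp only [hA, if_neg hij]
    constructor
    · intro hne
      by_contra hadj
      rw [if_neg hadj] at hne; exact hne rfl
    · intro hadj
      rw [if_pos hadj]
      exact hBne i j hadj
  · -- null vector
    funext v
    show ∑ u, A v u * (if u ∈ F then (1:ℝ) else 0) = 0
    rw [Finset.sum_congr rfl (fun u _ => by
      rw [mul_ite, mul_one, mul_zero])]
    rw [← Finset.sum_filter]
    by_cases hvF : v ∈ F
    · -- row in F
      have hvmem : v ∈ Finset.univ.filter (fun u => u ∈ F) := by simp [hvF]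
      rw [← Finset.add_sum_erase _ _ hvmem]
      have hdiag : A v v = -((d v : ℝ)) := by simp [hA, hvF]
      have hstep : ∀ u ∈ (Finset.univ.filter (fun u => u ∈ F)).erase v,
          A v u = if G.Adj v u then (1:ℝ) else 0 := by
        intro u hu
        have huv : u ≠ v := Finset.ne_of_mem_erase hu
        have huF : u ∈ F := by simpa using (Finset.mem_of_mem_erase hu)
        simp only [hA, if_neg (Ne.symm huv)]
        by_cases hadj : G.Adj v u
        · simp [hadj, hB, hvF, huF]
        · simp [hadj]
      rw [Finset.sum_congr rfl hstep, Finset.sum_boole]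
      have hfil : ((Finset.univ.filter (fun u => u ∈ F)).erase v).filter (fun u => G.Adj v u)
          = N v := by
        ext u
        simp only [hN, Finset.mem_filter, Finset.mem_erase, Finset.mem_univ, true_and]
        constructor
        · rintro ⟨⟨_, huF⟩, hadj⟩; exact ⟨huF, hadj⟩
        · rintro ⟨huF, hadj⟩; exact ⟨⟨hadj.ne', huF⟩, hadj⟩
      rw [hfil, hdiag]
      simp [hd]
    · -- row outside F
      have : ∀ u ∈ Finset.univ.filter (fun u => u ∈ F), A v u = if u ∈ N v then c v u else 0 := by
        intro u hu
        rw [Finset.mem_filter] at hu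
        have huv : v ≠ u := fun he => hvF (he ▸ hu.2)
        simp only [hA, if_neg huv, hN, Finset.mem_filter, Finset.mem_univ, true_and]
        by_cases hadj : G.Adj v u
        · simp [hadj, hu.2, hB, hvF]
        · simp [hadj]
      rw [Finset.sum_congr rfl this]
      rw [Finset.sum_ite_mem]
      have hsub : Finset.univ.filter (fun u => u ∈ F) ∩ N v = N v := by
        apply Finset.inter_eq_right.mpr
        intro u hu
        simp only [hN, Finset.mem_filter] at hu
        simp [hu.2.1]
      rw [hsub]
      by_cases hne : (N v).Nonempty
      · have hw0' := hw0mem v hne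
        rw [← Finset.add_sum_erase _ _ hw0']
        have h1 : c v (w0 v) = 1 - (d v : ℝ) := by simp [hc]
        have h2 : ∑ u ∈ (N v).erase (w0 v), c v u = ((N v).erase (w0 v)).card • (1:ℝ) := by
          rw [Finset.sum_congr rfl (fun u hu => ?_), Finset.sum_const]
          simp only [hc, if_neg (Finset.ne_of_mem_erase hu)]
        rw [h1, h2, Finset.card_erase_of_mem hw0']
        have h3 : 1 ≤ d v := Finset.card_pos.mpr hne
        show (1:ℝ) - (d v : ℝ) + (d v - 1 : ℕ) • (1:ℝ) = 0
        rw [nsmul_eq_mul, Nat.cast_sub h3]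
        push_cast
        ring
      · rw [Finset.not_nonempty_iff_eq_empty.mp hne, Finset.sum_empty]

/-- spark of a graph equals the minimum cardinality of a fort. -/
theorem stmt2 {n : ℕ} (G : SimpleGraph (Fin n)) (h : ∃ F : Set (Fin n), IsFort G F) :
    sparkG G = sInf {k | ∃ F : Set (Fin n), IsFort G F ∧ F.ncard = k} := by
  set K := {k | ∃ F : Set (Fin n), IsFort G F ∧ F.ncard = k} with hK
  obtain ⟨F₀, hF₀⟩ := h
  have hKne : K.Nonempty := ⟨F₀.ncard, F₀, hF₀, rfl⟩
  obtain ⟨Fm, hFm, hFmcard⟩ : ∃ F, IsFort G F ∧ F.ncard = sInf K := Nat.sInf_mem hKne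
  obtain ⟨A, hA, hAx⟩ := exists_matrix_of_fort G hFm
  set x : Fin n → ℝ := fun i => if i ∈ Fm then (1:ℝ) else 0 with hxdef
  have hsupp : {i | x i ≠ 0} = Fm := by
    ext i
    simp only [Set.mem_setOf_eq, hxdef]
    by_cases hi : i ∈ Fm <;> simp [hi]
  have hx : x ≠ 0 := by
    obtain ⟨v, hv⟩ := hFm.1
    intro h0
    have : x v = 0 := congrFun h0 v
    rw [hxdef] at this
    simp [hv] at this
  have hsing : ∃ y : Fin n → ℝ, y ≠ 0 ∧ A.mulVec y = 0 := ⟨x, hx, hAx⟩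
  have hsparkA : A.spark ≤ sInf K := by
    rw [Matrix.spark, if_pos hsing]
    exact le_trans (Nat.sInf_le ⟨x, hx, hAx, hsupp ▸ rfl⟩) (le_of_eq hFmcard)
  apply le_antisymm
  · exact le_trans (Nat.sInf_le ⟨A, hA, rfl⟩) hsparkA
  · rw [sparkG]
    refine le_csInf ⟨A.spark, A, hA, rfl⟩ ?_
    rintro s ⟨A', hA', rfl⟩
    rw [Matrix.spark]
    split
    · rename_i hsing'
      set T := {k | ∃ y : Fin n → ℝ, y ≠ 0 ∧ A'.mulVec y = 0 ∧ {i | y i ≠ 0}.ncard = k} with hT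
      have hTne : T.Nonempty := by
        obtain ⟨y, hy, hAy⟩ := hsing'
        exact ⟨_, y, hy, hAy, rfl⟩
      obtain ⟨y, hy, hAy, hycard⟩ := Nat.sInf_mem hTne
      exact hycard ▸ Nat.sInf_le ⟨_, support_isFort hA' hy hAy, rfl⟩
    · have : F₀.ncard ≤ Fintype.card (Fin n) := by
        rw [Set.ncard_eq_toFinset_card']
        exact le_trans (Finset.card_le_card (Finset.subset_univ _)) (le_of_eq (Finset.card_univ))
      exact le_trans (Nat.sInf_le ⟨F₀, hF₀, rfl⟩) (by omega)
end

section
/- Let G be a simple graph on n vertices and let 1 ≤ k < n. If every k-element subset of V(G) is a fort of G, then every (k+1)-element subset of V(G) is a fort of G. -/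
open Matrix
open scoped Classical

/-- if every `k`-subset of vertices is a fort, so is every `(k+1)`-subset. -/
theorem stmt4 {n : ℕ} (G : SimpleGraph (Fin n)) (k : ℕ) (h1 : 1 ≤ k) (h2 : k < n)
    (h : ∀ W : Set (Fin n), W.ncard = k → IsFort G W) :
    ∀ W : Set (Fin n), W.ncard = k + 1 → IsFort G W := by
  intro W hW
  have hWfin : W.Finite := Set.toFinite W
  constructor
  · rw [Set.nonempty_iff_ne_empty]
    intro hE
    rw [hE] at hW
    simp at hW
  · rintro v hv ⟨w, ⟨hwW, hadj⟩, huniq⟩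
    -- find u ∈ W, u ≠ w
    have h2card : 2 ≤ W.ncard := by omega
    obtain ⟨u, huW, hune⟩ : ∃ u ∈ W, u ≠ w := by
      by_contra hc
      push_neg at hc
      have : W ⊆ {w} := fun x hx => hc x hx
      have := Set.ncard_le_ncard this (Set.finite_singleton w)
      rw [Set.ncard_singleton] at this
      omega
    have hW' : (W \ {u}).ncard = k := by
      rw [Set.ncard_diff_singleton_of_mem huW, hW]; omega
    have hfort := h (W \ {u}) hW'
    apply hfort.2 v (fun hv' => hv hv'.1)
    refine ⟨w, ⟨⟨hwW, by simpa using hune.symm⟩, hadj⟩, ?_⟩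
    rintro y ⟨⟨hyW, -⟩, hyadj⟩
    exact huniq y ⟨hyW, hyadj⟩
end

section
/- Let A be an n×n real symmetric matrix with rank(A) = k < n, and let X be an n×(n−k) real matrix with rank(X) = n−k such that AX = 0. Then the following are equivalent: (1) every k×k principal submatrix of A is nonsingular; (2) every (n−k)×(n−k) submatrix of X (obtained by selecting any n−k rows) is nonsingular; (3) spark(A) = k+1. -/
open Matrix
open scoped Classical

section helpers

/-- mulVec of an extended vector equals mulVec of the column submatrix. -/
lemma mulVec_extend_eq {α : Type*} [Fintype α] {n m : ℕ} (M : Matrix α (Fin n) ℝ)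
    (f : Fin m → Fin n) (hf : Function.Injective f) (c : Fin m → ℝ) :
    M.mulVec (Function.extend f c 0) = (M.submatrix id f).mulVec c := by
  funext i
  simp only [Matrix.mulVec, dotProduct, Matrix.submatrix_apply, id]
  calc (∑ x : Fin n, M i x * Function.extend f c 0 x)
      = ∑ x ∈ Finset.univ.image f, M i x * Function.extend f c 0 x := by
        refine (Finset.sum_subset (Finset.subset_univ _) ?_).symm
        intro j _ hj
        rw [Function.extend_apply' _ _ _ (by
          rintro ⟨a, rfl⟩; exact hj (Finset.mem_image_of_mem f (Finset.mem_univ a)))]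
        simp
    _ = ∑ a : Fin m, M i (f a) * Function.extend f c 0 (f a) :=
        Finset.sum_image (by intro a _ b _ h; exact hf h)
    _ = ∑ a : Fin m, M i (f a) * c a := by simp [hf.extend_apply]

lemma eq_extend_of_support {n m : ℕ} (f : Fin m → Fin n) (hf : Function.Injective f)
    (x : Fin n → ℝ) (hx : ∀ j, j ∉ Set.range f → x j = 0) :
    x = Function.extend f (x ∘ f) 0 := by
  funext j
  by_cases h : ∃ a, f a = j
  · obtain ⟨a, rfl⟩ := h; rw [hf.extend_apply]; rfl
  · rw [Function.extend_apply' _ _ _ h]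
    exact hx j h

lemma support_ncard_le_of_range {n m : ℕ} (f : Fin m → Fin n) (hf : Function.Injective f)
    (x : Fin n → ℝ) (hx : ∀ j, j ∉ Set.range f → x j = 0) :
    {i | x i ≠ 0}.ncard ≤ m := by
  have hsub : {i | x i ≠ 0} ⊆ Set.range f := by
    intro j hj
    by_contra h
    exact hj (hx j h)
  calc {i | x i ≠ 0}.ncard ≤ (Set.range f).ncard :=
        Set.ncard_le_ncard hsub (Set.finite_range f)
    _ = m := by
        rw [Set.ncard_eq_toFinset_card', Set.toFinset_range]
        rw [Finset.card_image_of_injective _ hf, Finset.card_univ, Fintype.card_fin]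

/-- a symmetric-free fact: any matrix of rank `k < n` has a nonzero null vector
supported on at most `k+1` coordinates. -/
lemma exists_small_null {n k : ℕ} (A : Matrix (Fin n) (Fin n) ℝ) (hk : A.rank = k)
    (hkn : k < n) :
    ∃ x : Fin n → ℝ, x ≠ 0 ∧ A.mulVec x = 0 ∧ {i | x i ≠ 0}.ncard ≤ k + 1 := by
  have hkn' : k + 1 ≤ n := hkn
  set f : Fin (k + 1) → Fin n := Fin.castLE hkn' with hfdef
  have hf : Function.Injective f := Fin.castLE_injective hkn'
  set B : Matrix (Fin n) (Fin (k + 1)) ℝ := A.submatrix id f with hB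
  -- range of B.mulVecLin is inside range of A.mulVecLin
  have hle : LinearMap.range B.mulVecLin ≤ LinearMap.range A.mulVecLin := by
    rintro v ⟨c, rfl⟩
    exact ⟨Function.extend f c 0, by
      simp only [mulVecLin_apply]; rw [mulVec_extend_eq A f hf c]⟩
  have hrankB : Module.finrank ℝ (LinearMap.range B.mulVecLin) ≤ k := by
    have := Submodule.finrank_mono hle
    rw [show Module.finrank ℝ (LinearMap.range A.mulVecLin) = A.rank from rfl, hk] at this
    exact this
  have hrn := LinearMap.finrank_range_add_finrank_ker B.mulVecLin
  rw [Module.finrank_pi ℝ, Fintype.card_fin] at hrn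
  have hker : Module.finrank ℝ (LinearMap.ker B.mulVecLin) ≠ 0 := by omega
  have hkerbot : LinearMap.ker B.mulVecLin ≠ ⊥ := by
    intro h
    rw [h, finrank_bot] at hker
    exact hker rfl
  obtain ⟨c, hc, hc0⟩ := Submodule.exists_mem_ne_zero_of_ne_bot hkerbot
  refine ⟨Function.extend f c 0, ?_, ?_, ?_⟩
  · obtain ⟨a, ha⟩ := Function.ne_iff.mp hc0
    refine Function.ne_iff.mpr ⟨f a, ?_⟩
    rw [hf.extend_apply]
    simpa using ha
  · rw [mulVec_extend_eq A f hf c]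
    exact hc
  · refine support_ncard_le_of_range f hf _ (fun j hj => ?_)
    exact Function.extend_apply' _ _ _ (fun h => hj h)

lemma ker_eq_range {n k : ℕ} (A : Matrix (Fin n) (Fin n) ℝ) (hk : A.rank = k)
    (hkn : k ≤ n) (X : Matrix (Fin n) (Fin (n - k)) ℝ) (hX : X.rank = n - k)
    (hAX : A * X = 0) :
    LinearMap.ker A.mulVecLin = LinearMap.range X.mulVecLin := by
  have hle : LinearMap.range X.mulVecLin ≤ LinearMap.ker A.mulVecLin := by
    rintro v ⟨c, rfl⟩
    simp only [LinearMap.mem_ker, mulVecLin_apply]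
    rw [Matrix.mulVec_mulVec, hAX, Matrix.zero_mulVec]
  have hrn := LinearMap.finrank_range_add_finrank_ker A.mulVecLin
  rw [Module.finrank_pi ℝ, Fintype.card_fin] at hrn
  have hrk : Module.finrank ℝ (LinearMap.range A.mulVecLin) = k := hk
  have hkerA : Module.finrank ℝ (LinearMap.ker A.mulVecLin) = n - k := by omega
  have hrX : Module.finrank ℝ (LinearMap.range X.mulVecLin) = n - k := hX
  exact (Submodule.eq_of_le_of_finrank_le hle (by rw [hkerA, hrX])).symm

lemma X_injective {n k : ℕ} (X : Matrix (Fin n) (Fin (n - k)) ℝ) (hX : X.rank = n - k) :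
    Function.Injective X.mulVecLin := by
  rw [← LinearMap.ker_eq_bot]
  have hrn := LinearMap.finrank_range_add_finrank_ker X.mulVecLin
  rw [Module.finrank_pi ℝ, Fintype.card_fin] at hrn
  have hrX : Module.finrank ℝ (LinearMap.range X.mulVecLin) = n - k := hX
  have : Module.finrank ℝ (LinearMap.ker X.mulVecLin) = 0 := by omega
  exact Submodule.finrank_eq_zero.mp this

end helpers

section main

variable {n k : ℕ}

lemma P_iff_X (A : Matrix (Fin n) (Fin n) ℝ) (hk : A.rank = k) (hkn : k < n)
    (X : Matrix (Fin n) (Fin (n - k)) ℝ) (hX : X.rank = n - k) (hAX : A * X = 0) :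
    (∀ f : Fin (n - k) → Fin n, Function.Injective f → (X.submatrix f id).det ≠ 0) ↔
    (∀ x : Fin n → ℝ, x ≠ 0 → A.mulVec x = 0 → k + 1 ≤ {i | x i ≠ 0}.ncard) := by
  constructor
  · intro h2 x hx hAx
    by_contra hlt
    push_neg at hlt
    -- x is in the column space of X
    have hxker : x ∈ LinearMap.ker A.mulVecLin := by
      simp only [LinearMap.mem_ker, mulVecLin_apply]; exact hAx
    rw [ker_eq_range A hk hkn.le X hX hAX] at hxker
    obtain ⟨c, hc⟩ := hxker
    have hc0 : c ≠ 0 := by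
      rintro rfl
      rw [map_zero] at hc
      exact hx hc.symm
    -- the support as a finset
    set s : Finset (Fin n) := Finset.univ.filter (fun i => x i ≠ 0) with hs
    have hscard : s.card ≤ k := by
      have : {i | x i ≠ 0} = ↑s := by ext i; simp [hs]
      have h' := hlt
      rw [this, Set.ncard_coe_finset] at h'
      omega
    have hcompl : n - k ≤ sᶜ.card := by
      rw [Finset.card_compl, Fintype.card_fin]
      omega
    obtain ⟨t, hts, htcard⟩ := Finset.exists_subset_card_eq hcompl
    set g := t.orderEmbOfFin htcard with hg
    refine h2 g g.injective (Matrix.exists_mulVec_eq_zero_iff.mp ⟨c, hc0, ?_⟩)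
    funext i
    have : ((X.submatrix (⇑g) id).mulVec c) i = X.mulVec c (g i) := rfl
    rw [this]
    have hgi : (g i : Fin n) ∈ t := t.orderEmbOfFin_mem htcard i
    have : (g i : Fin n) ∉ s := by
      have := hts hgi
      simpa using Finset.mem_compl.mp this
    have hx0 : x (g i) = 0 := by
      by_contra h
      exact this (by simp [hs, h])
    rw [show X.mulVec c = x from hc, hx0]
    rfl
  · intro hP f hf hdet
    obtain ⟨c, hc0, hc⟩ := Matrix.exists_mulVec_eq_zero_iff.mpr hdet
    set x := X.mulVec c with hx
    have hxne : x ≠ 0 := by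
      intro h
      exact hc0 (X_injective X hX (by simpa [mulVecLin_apply] using h))
    have hAx : A.mulVec x = 0 := by
      rw [hx, Matrix.mulVec_mulVec, hAX, Matrix.zero_mulVec]
    have hsmall := hP x hxne hAx
    -- but the support of x avoids the n-k rows given by f
    have hxs : ∀ i, x (f i) = 0 := by
      intro i
      have h' : ((X.submatrix f id).mulVec c) i = x (f i) := rfl
      rw [← h', hc]
      rfl
    have hsub : {i | x i ≠ 0} ⊆ ↑((Finset.univ.image f)ᶜ) := by
      intro j hj
      simp only [Finset.coe_compl, Set.mem_compl_iff, Finset.coe_image,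
        Finset.coe_univ, Set.image_univ, Set.mem_range]
      rintro ⟨i, rfl⟩
      exact hj (hxs i)
    have hcard : {i | x i ≠ 0}.ncard ≤ k := by
      calc {i | x i ≠ 0}.ncard ≤ ((Finset.univ.image f)ᶜ : Finset (Fin n)).card := by
            rw [← Set.ncard_coe_finset]
            exact Set.ncard_le_ncard hsub (Finset.finite_toSet _)
        _ = k := by
            rw [Finset.card_compl, Finset.card_image_of_injective _ hf,
              Finset.card_univ, Fintype.card_fin, Fintype.card_fin]
            omega
    omega

end main

lemma P_iff_A {n k : ℕ} (A : Matrix (Fin n) (Fin n) ℝ) (hsym : A.IsSymm)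
    (hk : A.rank = k) (hkn : k < n)
    (X : Matrix (Fin n) (Fin (n - k)) ℝ) (hX : X.rank = n - k) (hAX : A * X = 0) :
    (∀ f : Fin k → Fin n, Function.Injective f → (A.submatrix f f).det ≠ 0) ↔
    (∀ x : Fin n → ℝ, x ≠ 0 → A.mulVec x = 0 → k + 1 ≤ {i | x i ≠ 0}.ncard) := by
  constructor
  · intro h1 x hx hAx
    by_contra hlt
    push_neg at hlt
    set s : Finset (Fin n) := Finset.univ.filter (fun i => x i ≠ 0) with hs
    have hscard : s.card ≤ k := by
      have hcoe : {i | x i ≠ 0} = ↑s := by ext i; simp [hs]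
      rw [hcoe, Set.ncard_coe_finset] at hlt
      omega
    obtain ⟨t, hts, htcard⟩ := Finset.exists_superset_card_eq hscard
      (by rw [Fintype.card_fin]; omega)
    set f := t.orderEmbOfFin htcard with hf
    have hsupp : ∀ j, j ∉ Set.range ⇑f → x j = 0 := by
      intro j hj
      rw [Finset.range_orderEmbOfFin] at hj
      by_contra h
      exact hj (hts (by simp [hs, h]))
    have hext : x = Function.extend ⇑f (x ∘ ⇑f) 0 :=
      eq_extend_of_support ⇑f f.injective x hsupp
    have hxf : (A.submatrix (⇑f) (⇑f)).mulVec (x ∘ ⇑f) = 0 := by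
      funext i
      have h1' : ((A.submatrix (⇑f) (⇑f)).mulVec (x ∘ ⇑f)) i
          = ((A.submatrix id ⇑f).mulVec (x ∘ ⇑f)) (f i) := rfl
      rw [h1', ← mulVec_extend_eq A ⇑f f.injective, ← hext, hAx]
      rfl
    have hxfne : x ∘ ⇑f ≠ 0 := by
      obtain ⟨j, hj⟩ := Function.ne_iff.mp hx
      have hj' : x j ≠ 0 := by simpa using hj
      have hjt : j ∈ t := hts (by simp [hs, hj'])
      have : j ∈ Set.range ⇑f := by rw [Finset.range_orderEmbOfFin]; exact hjt
      obtain ⟨i, rfl⟩ := this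
      exact Function.ne_iff.mpr ⟨i, hj⟩
    exact h1 ⇑f f.injective (Matrix.exists_mulVec_eq_zero_iff.mp ⟨_, hxfne, hxf⟩)
  · intro hP f hf hdet
    have h2 := (P_iff_X A hk hkn X hX hAX).mpr hP
    obtain ⟨y, hy0, hy⟩ := Matrix.exists_mulVec_eq_zero_iff.mpr hdet
    set x := Function.extend f y 0 with hxdef
    have hxsupp : ∀ j, j ∉ Set.range f → x j = 0 := fun j hj =>
      Function.extend_apply' _ _ _ (fun h => hj h)
    have hxne : x ≠ 0 := by
      obtain ⟨a, ha⟩ := Function.ne_iff.mp hy0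
      refine Function.ne_iff.mpr ⟨f a, ?_⟩
      rw [hxdef]
      simp only [hf.extend_apply]
      simpa using ha
    set z := A.mulVec x with hz
    have hzf : ∀ i, z (f i) = 0 := by
      intro i
      have h1' : z (f i) = ((A.submatrix id f).mulVec y) (f i) := by
        rw [hz, hxdef, mulVec_extend_eq A f hf y]
      rw [h1']
      have h2' : ((A.submatrix id f).mulVec y) (f i) = ((A.submatrix f f).mulVec y) i := rfl
      rw [h2', hy]
      rfl
    by_cases hz0 : z = 0
    · have := hP x hxne hz0
      have := support_ncard_le_of_range f hf x hxsupp
      omega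
    · -- z is orthogonal to the columns of X
      have hXz : Xᵀ.mulVec z = 0 := by
        rw [hz, Matrix.mulVec_mulVec, show Xᵀ * A = 0 from ?_, Matrix.zero_mulVec]
        calc Xᵀ * A = Xᵀ * Aᵀ := by rw [hsym.eq]
          _ = (A * X)ᵀ := (Matrix.transpose_mul A X).symm
          _ = 0 := by rw [hAX, Matrix.transpose_zero]
      -- z is supported on the complement of the range of f
      have hccard : ((Finset.univ.image f)ᶜ : Finset (Fin n)).card = n - k := by
        rw [Finset.card_compl, Finset.card_image_of_injective _ hf,
          Finset.card_univ, Fintype.card_fin, Fintype.card_fin]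
      set g := ((Finset.univ.image f)ᶜ : Finset (Fin n)).orderEmbOfFin hccard with hg
      have hzsupp : ∀ j, j ∉ Set.range ⇑g → z j = 0 := by
        intro j hj
        rw [Finset.range_orderEmbOfFin] at hj
        have : j ∈ Finset.univ.image f := by
          by_contra h
          exact hj (Finset.mem_compl.mpr h)
        obtain ⟨i, _, rfl⟩ := Finset.mem_image.mp this
        exact hzf i
      have hzext : z = Function.extend ⇑g (z ∘ ⇑g) 0 :=
        eq_extend_of_support ⇑g g.injective z hzsupp
      have hsub : (Xᵀ.submatrix id ⇑g).mulVec (z ∘ ⇑g) = 0 := by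
        rw [← mulVec_extend_eq Xᵀ ⇑g g.injective, ← hzext, hXz]
      have hzgne : z ∘ ⇑g ≠ 0 := by
        obtain ⟨j, hj⟩ := Function.ne_iff.mp hz0
        have : j ∈ Set.range ⇑g := by
          by_contra h
          exact hj (hzsupp j h)
        obtain ⟨i, rfl⟩ := this
        exact Function.ne_iff.mpr ⟨i, hj⟩
      have hdet2 : (Xᵀ.submatrix id ⇑g).det = 0 :=
        Matrix.exists_mulVec_eq_zero_iff.mp ⟨_, hzgne, hsub⟩
      have heq : Xᵀ.submatrix id ⇑g = (X.submatrix ⇑g id)ᵀ := rfl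
      rw [heq, Matrix.det_transpose] at hdet2
      exact h2 ⇑g g.injective hdet2


lemma spark_eq_iff_aux {n k : ℕ} (A : Matrix (Fin n) (Fin n) ℝ) (hk : A.rank = k)
    (hkn : k < n) :
    A.spark = k + 1 ↔
    (∀ x : Fin n → ℝ, x ≠ 0 → A.mulVec x = 0 → k + 1 ≤ {i | x i ≠ 0}.ncard) := by
  obtain ⟨x₀, hx₀, hAx₀, hcard₀⟩ := exists_small_null A hk hkn
  rw [Matrix.spark, if_pos ⟨x₀, hx₀, hAx₀⟩]
  set S : Set ℕ :=
    {m | ∃ x : Fin n → ℝ, x ≠ 0 ∧ A.mulVec x = 0 ∧ {i | x i ≠ 0}.ncard = m} with hS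
  constructor
  · intro h x hx hAx
    have hmem : {i | x i ≠ 0}.ncard ∈ S := ⟨x, hx, hAx, rfl⟩
    have := Nat.sInf_le hmem
    omega
  · intro hP
    have hne : S.Nonempty := ⟨_, x₀, hx₀, hAx₀, rfl⟩
    obtain ⟨x, hx, hAx, hcard⟩ := Nat.sInf_mem hne
    have h1 : k + 1 ≤ sInf S := hcard ▸ hP x hx hAx
    have h2 : sInf S ≤ {i | x₀ i ≠ 0}.ncard := Nat.sInf_le ⟨x₀, hx₀, hAx₀, rfl⟩
    omega

/-- for a symmetric `A` of rank `k < n` with `X` a rank-`(n-k)` null matrix,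
the following are equivalent: all `k×k` principal submatrices of `A` are nonsingular;
all `(n-k)×(n-k)` submatrices of `X` are nonsingular; `spark(A) = k+1`. -/
theorem stmt5 {n k : ℕ} (A : Matrix (Fin n) (Fin n) ℝ) (hsym : A.IsSymm)
    (hk : A.rank = k) (hkn : k < n)
    (X : Matrix (Fin n) (Fin (n - k)) ℝ) (hX : X.rank = n - k) (hAX : A * X = 0) :
    ((∀ f : Fin k → Fin n, Function.Injective f → (A.submatrix f f).det ≠ 0) ↔
      A.spark = k + 1) ∧
    ((∀ f : Fin (n - k) → Fin n, Function.Injective f → (X.submatrix f id).det ≠ 0) ↔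
      A.spark = k + 1) := by
  rw [spark_eq_iff_aux A hk hkn]
  exact ⟨P_iff_A A hsym hk hkn X hX hAX, P_iff_X A hk hkn X hX hAX⟩
end

section
/- Let A be an n×n real symmetric matrix that is nonsingular, let x be a vector in ℝⁿ, and let B be the (n+1)×(n+1) symmetric matrix with block form B = [[xᵀAx, xᵀA],[Ax, A]]. Then rank(B) = rank(A) = n and spark(B) = |supp(x)| + 1, where |supp(x)| is the number of nonzero coordinates of x. -/
open Matrix
open scoped Classical

/-!
Write `C = [x | 1]`, so that `B = Cᵀ * A * C` and `C *ᵥ v = v₀ • x + v'` for `v = (v₀, v')`.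
Both `Cᵀ` (which contains an identity block) and `A` are injective, so `B *ᵥ v = 0` iff
`v' = -v₀ • x`: the kernel of `B` is the line spanned by `(1, -x)`. Rank–nullity gives
`rank B = n`, and every nonzero null vector of `B` is a nonzero multiple of `(1, -x)`, whose
support has `|supp x| + 1` elements.
-/

namespace Matrix

section Bordered

variable {R K n : Type*} [CommRing R] [Field K] [Fintype n]

def bordered (A : Matrix n n R) (x : n → R) : Matrix (Fin 1 ⊕ n) (Fin 1 ⊕ n) R :=
  fromBlocks (of fun _ _ => x ⬝ᵥ A *ᵥ x) (of fun _ j => vecMul x A j) (of fun i _ => (A *ᵥ x) i) A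

theorem bordered_mulVec (A : Matrix n n R) (x : n → R) (v : Fin 1 ⊕ n → R) :
    bordered A x *ᵥ v =
      Sum.elim (fun _ => x ⬝ᵥ A *ᵥ (v (Sum.inl 0) • x + v ∘ Sum.inr))
        (A *ᵥ (v (Sum.inl 0) • x + v ∘ Sum.inr)) := by
  ext (i | i)
  · simp [bordered, fromBlocks_mulVec, mulVec_add, mulVec_smul, dotProduct_add,
      dotProduct_mulVec]
    simp [mulVec, dotProduct, mul_comm]
  · simp [bordered, fromBlocks_mulVec, mulVec_add, mulVec_smul]
    simp [mulVec, dotProduct, mul_comm]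

theorem bordered_mulVec_eq_zero_iff [DecidableEq n] {A : Matrix n n K} (hA : IsUnit A.det)
    (x : n → K) (v : Fin 1 ⊕ n → K) :
    bordered A x *ᵥ v = 0 ↔ v (Sum.inl 0) • x + v ∘ Sum.inr = 0 := by
  have hinj : Function.Injective A.mulVec :=
    mulVec_injective_iff_isUnit.mpr ((isUnit_iff_isUnit_det A).mpr hA)
  rw [bordered_mulVec, ← Sum.elim_zero_zero, Sum.elim_eq_iff]
  constructor
  · rintro ⟨-, h⟩
    exact hinj (by rwa [mulVec_zero])
  · intro h
    rw [h, mulVec_zero, dotProduct_zero]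
    exact ⟨rfl, rfl⟩

theorem bordered_mulVec_eq_zero_iff_exists_smul [DecidableEq n] {A : Matrix n n K}
    (hA : IsUnit A.det) (x : n → K) (v : Fin 1 ⊕ n → K) :
    bordered A x *ᵥ v = 0 ↔ ∃ c : K, c • (Sum.elim 1 (-x) : Fin 1 ⊕ n → K) = v := by
  rw [bordered_mulVec_eq_zero_iff hA]
  constructor
  · intro h
    refine ⟨v (Sum.inl 0), ?_⟩
    ext (i | i)
    · simp [Subsingleton.elim i 0]
    · simpa [neg_eq_iff_add_eq_zero] using congrFun h i
  · rintro ⟨c, rfl⟩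
    ext i
    simp

end Bordered

theorem ncard_setOf_sumElim_one_ne_zero {M n : Type*} [Zero M] [One M] [NeZero (1 : M)]
    [Finite n] (x : n → M) :
    {i | (Sum.elim 1 x : Fin 1 ⊕ n → M) i ≠ 0}.ncard = {i | x i ≠ 0}.ncard + 1 := by
  have : {i | (Sum.elim 1 x : Fin 1 ⊕ n → M) i ≠ 0} =
      insert (Sum.inl 0) (Sum.inr '' {i | x i ≠ 0}) := by
    ext (i | i)
    · simp [Subsingleton.elim i 0]
    · simp
  rw [this, Set.ncard_insert_of_notMem (by simp), Set.ncard_image_of_injective _ Sum.inr_injective]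

theorem rank_add_one_of_forall_mulVec_eq_zero_iff {K m : Type*} [Field K] [Fintype m]
    {B : Matrix m m K} {u : m → K} (hu : u ≠ 0) (hker : ∀ v, B *ᵥ v = 0 ↔ ∃ c : K, c • u = v) :
    B.rank + 1 = Fintype.card m := by
  have hker' : LinearMap.ker B.mulVecLin = K ∙ u := by
    ext v
    simpa [Submodule.mem_span_singleton] using hker v
  have := LinearMap.finrank_range_add_finrank_ker B.mulVecLin
  rwa [hker', finrank_span_singleton hu, Module.finrank_fintype_fun_eq_card] at this

theorem spark_eq_of_forall_mulVec_eq_zero_iff {m : Type*} [Fintype m] {B : Matrix m m ℝ}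
    {u : m → ℝ} (hu : u ≠ 0) (hker : ∀ v, B *ᵥ v = 0 ↔ ∃ c : ℝ, c • u = v) :
    B.spark = {i | u i ≠ 0}.ncard := by
  have hset : {k | ∃ v : m → ℝ, v ≠ 0 ∧ B *ᵥ v = 0 ∧ {i | v i ≠ 0}.ncard = k} =
      {{i | u i ≠ 0}.ncard} := by
    ext k
    constructor
    · rintro ⟨v, hv, hBv, rfl⟩
      obtain ⟨c, rfl⟩ := (hker v).mp hBv
      have hc : c ≠ 0 := by rintro rfl; simp at hv
      simp [hc]
    · rintro rfl
      exact ⟨u, hu, (hker u).mpr ⟨1, one_smul ℝ u⟩, rfl⟩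
  rw [spark, if_pos ⟨u, hu, (hker u).mpr ⟨1, one_smul ℝ u⟩⟩, hset, csInf_singleton]

end Matrix

theorem stmt6_general {n : ℕ} (A : Matrix (Fin n) (Fin n) ℝ)
    (hns : IsUnit A.det) (x : Fin n → ℝ)
    (B : Matrix (Fin 1 ⊕ Fin n) (Fin 1 ⊕ Fin n) ℝ)
    (hB : B = Matrix.fromBlocks
      (Matrix.of fun _ _ => x ⬝ᵥ A.mulVec x)
      (Matrix.of fun _ j => Matrix.vecMul x A j)
      (Matrix.of fun i _ => A.mulVec x i) A) :
    B.rank = A.rank ∧ A.rank = n ∧ B.spark = {i | x i ≠ 0}.ncard + 1 := by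
  obtain rfl : B = bordered A x := hB
  have hker := bordered_mulVec_eq_zero_iff_exists_smul hns x
  have hu : (Sum.elim 1 (-x) : Fin 1 ⊕ Fin n → ℝ) ≠ 0 :=
    fun h => by simpa using congrFun h (Sum.inl 0)
  have hrankA : A.rank = n := by simpa using rank_of_det_ne_zero hns.ne_zero
  have hrankB := rank_add_one_of_forall_mulVec_eq_zero_iff hu hker
  rw [Fintype.card_sum, Fintype.card_fin, Fintype.card_fin] at hrankB
  refine ⟨by omega, hrankA, ?_⟩
  rw [spark_eq_of_forall_mulVec_eq_zero_iff hu hker, ncard_setOf_sumElim_one_ne_zero]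
  simp

/-- bordering a nonsingular symmetric matrix `A` by `x` preserves the rank
and gives spark equal to `|supp(x)| + 1`. -/
theorem stmt6 {n : ℕ} (A : Matrix (Fin n) (Fin n) ℝ) (hsym : A.IsSymm)
    (hns : IsUnit A.det) (x : Fin n → ℝ)
    (B : Matrix (Fin 1 ⊕ Fin n) (Fin 1 ⊕ Fin n) ℝ)
    (hB : B = Matrix.fromBlocks
      (Matrix.of fun _ _ => x ⬝ᵥ A.mulVec x)
      (Matrix.of fun _ j => Matrix.vecMul x A j)
      (Matrix.of fun i _ => A.mulVec x i) A) :
    B.rank = A.rank ∧ A.rank = n ∧ B.spark = {i | x i ≠ 0}.ncard + 1 :=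
  stmt6_general A hns x B hB
end

section
/- Let G be a simple graph on n vertices and suppose A ∈ S(G) satisfies rank(A) = k < n−1 and spark(A) = s. Then there exists a matrix B ∈ S(G) such that rank(B) = k+1 and spark(B) = s. -/
open Matrix
open scoped Classical

set_option synthInstance.maxHeartbeats 1000000 in
/-- if `A ∈ S(G)` has rank `k < n-1` and spark `s`, then some `B ∈ S(G)`
has rank `k+1` and spark `s`. -/
theorem stmt7 {n : ℕ} (G : SimpleGraph (Fin n)) (A : Matrix (Fin n) (Fin n) ℝ)
    (hA : SMatrixOf G A) (k s : ℕ) (hk : A.rank = k) (hkn : k < n - 1) (hs : A.spark = s) :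
    ∃ B : Matrix (Fin n) (Fin n) ℝ, SMatrixOf G B ∧ B.rank = k + 1 ∧ B.spark = s := by
  classical
  set K := LinearMap.ker A.mulVecLin with hKdef
  have hmem : ∀ x : Fin n → ℝ, x ∈ K ↔ A.mulVec x = 0 := by
    intro x; simp [hKdef, LinearMap.mem_ker, Matrix.mulVecLin_apply]
  have hrn : A.rank + Module.finrank ℝ K = n := by
    rw [Matrix.rank]
    simpa [Module.finrank_fin_fun] using LinearMap.finrank_range_add_finrank_ker A.mulVecLin
  have hnul2 : 2 ≤ Module.finrank ℝ K := by omega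
  have hex : ∃ x : Fin n → ℝ, x ≠ 0 ∧ A.mulVec x = 0 := by
    have hKne : K ≠ ⊥ := by
      intro h
      rw [h, finrank_bot] at hnul2; omega
    obtain ⟨x, hxK, hx0⟩ := Submodule.exists_mem_ne_zero_of_ne_bot hKne
    exact ⟨x, hx0, (hmem x).mp hxK⟩
  rw [Matrix.spark, if_pos hex] at hs
  have hSne : {m | ∃ x : Fin n → ℝ, x ≠ 0 ∧ A.mulVec x = 0 ∧ {i | x i ≠ 0}.ncard = m}.Nonempty := by
    obtain ⟨x, hx0, hx⟩ := hex
    exact ⟨_, x, hx0, hx, rfl⟩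
  obtain ⟨z, hz0, hzA, hzcard⟩ :
      ∃ x : Fin n → ℝ, x ≠ 0 ∧ A.mulVec x = 0 ∧ {i | x i ≠ 0}.ncard = s := by
    have := Nat.sInf_mem hSne
    rw [hs] at this
    exact this
  have hzK : z ∈ K := (hmem z).mpr hzA
  have hs_le : ∀ x : Fin n → ℝ, x ≠ 0 → A.mulVec x = 0 → s ≤ {i | x i ≠ 0}.ncard := by
    intro x hx0 hx
    rw [← hs]
    exact Nat.sInf_le ⟨x, hx0, hx, rfl⟩
  clear hs hSne hex
  have key : ∃ i, z i = 0 ∧ ∃ w : Fin n → ℝ, A.mulVec w = 0 ∧ w i ≠ 0 := by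
    by_contra hcon
    push_neg at hcon
    have hspan : ¬ (K ≤ Submodule.span ℝ {z}) := by
      intro hle
      have h1 := Submodule.finrank_mono hle
      rw [finrank_span_singleton hz0] at h1
      omega
    obtain ⟨y, hyK, hy⟩ := SetLike.not_le_iff_exists.mp hspan
    have hyA : A.mulVec y = 0 := (hmem y).mp hyK
    obtain ⟨j, hj⟩ := Function.ne_iff.mp hz0
    simp only [Pi.zero_apply] at hj
    set w : Fin n → ℝ := y - (y j / z j) • z with hwdef
    have hwA : A.mulVec w = 0 := by
      simp [hwdef, Matrix.mulVec_sub, Matrix.mulVec_smul, hyA, hzA]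
    have hw0 : w ≠ 0 := by
      intro h
      apply hy
      rw [Submodule.mem_span_singleton]
      exact ⟨y j / z j, (sub_eq_zero.mp h).symm⟩
    have hwj : w j = 0 := by
      simp only [hwdef, Pi.sub_apply, Pi.smul_apply, smul_eq_mul]
      field_simp
      ring
    have hsub : {i | w i ≠ 0} ⊆ {i | z i ≠ 0} \ {j} := by
      intro i hi
      simp only [Set.mem_setOf_eq] at hi
      constructor
      · simp only [Set.mem_setOf_eq]
        intro hzi
        apply hi
        have hyi : y i = 0 := hcon i hzi y hyA
        simp [hwdef, hyi, hzi]
      · simp only [Set.mem_singleton_iff]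
        intro h; rw [h] at hi; exact hi hwj
    have hlt : {i | w i ≠ 0}.ncard < s := by
      calc {i | w i ≠ 0}.ncard ≤ ({i | z i ≠ 0} \ {j}).ncard :=
            Set.ncard_le_ncard hsub (Set.toFinite _)
        _ < {i | z i ≠ 0}.ncard := Set.ncard_diff_singleton_lt_of_mem hj (Set.toFinite _)
        _ = s := hzcard
    exact absurd (hs_le w hw0 hwA) (by omega)
  obtain ⟨i, hzi, w, hwA, hwi⟩ := key
  have hwK : w ∈ K := (hmem w).mpr hwA
  set d : Fin n → ℝ := fun j => if j = i then 1 else 0 with hddef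
  set B : Matrix (Fin n) (Fin n) ℝ := A + Matrix.diagonal d with hBdef
  -- kernel characterization
  have hker : ∀ x : Fin n → ℝ, B.mulVec x = 0 ↔ (A.mulVec x = 0 ∧ x i = 0) := by
    intro x
    constructor
    · intro hx
      have hd : (Matrix.diagonal d).mulVec x = B.mulVec x - A.mulVec x := by
        simp [hBdef, Matrix.add_mulVec]
      have h2 : w ⬝ᵥ A.mulVec x = 0 := by
        rw [Matrix.dotProduct_mulVec, ← Matrix.mulVec_transpose, hA.1, hwA]
        simp
      have h1 : w ⬝ᵥ (Matrix.diagonal d).mulVec x = 0 := by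
        rw [hd, hx]
        simp [dotProduct_sub, h2]
      have h3 : w ⬝ᵥ (Matrix.diagonal d).mulVec x = w i * x i := by
        simp only [dotProduct, Matrix.mulVec_diagonal, hddef]
        rw [Finset.sum_eq_single i] <;> simp +contextual
      have hxi : x i = 0 := by
        rcases mul_eq_zero.mp (h3 ▸ h1) with h | h
        · exact absurd h hwi
        · exact h
      refine ⟨?_, hxi⟩
      funext j
      have hxj := congrFun hx j
      simp only [hBdef, Matrix.add_mulVec, Pi.add_apply, Matrix.mulVec_diagonal, hddef,
        Pi.zero_apply] at hxj
      rcases eq_or_ne j i with h | h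
      · subst h; simpa [hxi] using hxj
      · simpa [h] using hxj
    · rintro ⟨h1, h2⟩
      funext j
      simp only [hBdef, Matrix.add_mulVec, Pi.add_apply, Matrix.mulVec_diagonal, hddef, h1,
        Pi.zero_apply]
      rcases eq_or_ne j i with h | h
      · subst h; simp [h2]
      · simp [h]
  -- rank of B
  set φ : K →ₗ[ℝ] ℝ := (LinearMap.proj i).comp K.subtype with hφdef
  have hφsurj : LinearMap.range φ = ⊤ := by
    rw [LinearMap.range_eq_top]
    intro r
    refine ⟨(r / w i) • ⟨w, hwK⟩, ?_⟩
    show ((r / w i) • w) i = r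
    simp only [Pi.smul_apply, smul_eq_mul]
    field_simp
  have hKB : LinearMap.ker B.mulVecLin = Submodule.map K.subtype (LinearMap.ker φ) := by
    ext x
    simp only [LinearMap.mem_ker, Matrix.mulVecLin_apply, Submodule.mem_map,
      Submodule.coe_subtype]
    rw [hker]
    constructor
    · rintro ⟨h1, h2⟩
      exact ⟨⟨x, (hmem x).mpr h1⟩, h2, rfl⟩
    · rintro ⟨⟨y, hyK⟩, hy1, rfl⟩
      exact ⟨(hmem y).mp hyK, hy1⟩
  have hkerφ : Module.finrank ℝ (LinearMap.ker φ) + 1 = Module.finrank ℝ K := by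
    have h := LinearMap.finrank_range_add_finrank_ker φ
    rw [hφsurj, finrank_top, Module.finrank_self] at h
    omega
  have hrkB : Module.finrank ℝ (LinearMap.ker B.mulVecLin) + 1 = Module.finrank ℝ K := by
    have hEq : Module.finrank ℝ (Submodule.map K.subtype (LinearMap.ker φ)) =
        Module.finrank ℝ (LinearMap.ker φ) :=
      (Submodule.equivSubtypeMap K (LinearMap.ker φ)).finrank_eq.symm
    rw [hKB, hEq]
    exact hkerφ
  have hrnB : B.rank + Module.finrank ℝ (LinearMap.ker B.mulVecLin) = n := by
    rw [Matrix.rank]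
    simpa [Module.finrank_fin_fun] using LinearMap.finrank_range_add_finrank_ker B.mulVecLin
  refine ⟨B, ?_, ?_, ?_⟩
  · refine ⟨hA.1.add (Matrix.isSymm_diagonal d), ?_⟩
    intro a b hab
    have hBab : B a b = A a b := by
      simp only [hBdef, Matrix.add_apply, Matrix.diagonal_apply_ne _ hab, add_zero]
    rw [hBab]
    exact hA.2 a b hab
  · omega
  · have hzB : B.mulVec z = 0 := (hker z).mpr ⟨hzA, hzi⟩
    have hexB : ∃ x : Fin n → ℝ, x ≠ 0 ∧ B.mulVec x = 0 := ⟨z, hz0, hzB⟩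
    rw [Matrix.spark, if_pos hexB]
    apply le_antisymm
    · exact Nat.sInf_le ⟨z, hz0, hzB, hzcard⟩
    · refine le_csInf ⟨{i | z i ≠ 0}.ncard, z, hz0, hzB, rfl⟩ ?_
      rintro m ⟨x, hx0, hxB, rfl⟩
      exact hs_le x hx0 ((hker x).mp hxB).1
end

section
/- Let G be a connected simple graph on n ≥ 2 vertices. Then spark(G) = 2 if and only if G has a pair of duplicate vertices, i.e., there exist distinct vertices u, v such that either uv is an edge of G and N[u] = N[v], or uv is not an edge of G and N(u) = N(v). -/
open Matrix
open scoped Classical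

section Aux

variable {n : ℕ}

lemma exists_adj_of_connected (G : SimpleGraph (Fin n)) (hconn : G.Connected)
    (hn : 2 ≤ n) (i : Fin n) : ∃ w, G.Adj i w := by
  obtain ⟨j, hj⟩ := Fintype.exists_ne_of_one_lt_card (by rw [Fintype.card_fin]; omega) i
  obtain ⟨p⟩ := hconn.preconnected i j
  cases p with
  | nil => exact absurd rfl hj
  | cons h _ => exact ⟨_, h⟩

lemma ncard_support_ge_two (G : SimpleGraph (Fin n)) (hconn : G.Connected)
    (hn : 2 ≤ n) {A : Matrix (Fin n) (Fin n) ℝ} (hA : SMatrixOf G A)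
    {y : Fin n → ℝ} (hy : y ≠ 0) (hAy : A.mulVec y = 0) :
    2 ≤ {i | y i ≠ 0}.ncard := by
  by_contra h
  push_neg at h
  have hfin : {i | y i ≠ 0}.Finite := Set.toFinite _
  have hne : {i | y i ≠ 0}.Nonempty := by
    rcases Function.ne_iff.mp hy with ⟨i, hi⟩
    exact ⟨i, hi⟩
  have h1 : {i | y i ≠ 0}.ncard = 1 := by
    have := (Set.ncard_pos hfin).mpr hne
    omega
  obtain ⟨i, hsupp⟩ := Set.ncard_eq_one.mp h1
  have hyi : y i ≠ 0 := by
    have : i ∈ ({i} : Set (Fin n)) := rfl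
    rw [← hsupp] at this; exact this
  have hyj : ∀ j, j ≠ i → y j = 0 := by
    intro j hj
    by_contra hc
    have : j ∈ ({i} : Set (Fin n)) := hsupp ▸ hc
    exact hj this
  obtain ⟨w, hw⟩ := exists_adj_of_connected G hconn hn i
  have hwi : w ≠ i := hw.ne'
  have hAwi : A w i ≠ 0 := (hA.2 w i hwi).mpr hw.symm
  have h0 := congrFun hAy w
  rw [Matrix.mulVec, dotProduct] at h0
  have hsum : ∑ j, A w j * y j = A w i * y i := by
    refine Finset.sum_eq_single i ?_ ?_
    · intro j _ hj; rw [hyj j hj, mul_zero]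
    · intro hmem; exact absurd (Finset.mem_univ i) hmem
  rw [hsum] at h0
  exact mul_ne_zero hAwi hyi h0

lemma spark_ge_two (G : SimpleGraph (Fin n)) (hconn : G.Connected)
    (hn : 2 ≤ n) {A : Matrix (Fin n) (Fin n) ℝ} (hA : SMatrixOf G A) :
    2 ≤ A.spark := by
  rw [Matrix.spark]
  split_ifs with h
  · refine le_csInf ?_ ?_
    · obtain ⟨x, hx0, hx⟩ := h
      exact ⟨_, x, hx0, hx, rfl⟩
    · rintro k ⟨y, hy0, hy, rfl⟩
      exact ncard_support_ge_two G hconn hn hA hy0 hy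
  · simp only [Fintype.card_fin]
    omega

/-- key construction: if there are vertices `u ≠ v` whose neighborhoods agree off
`{u, v}`, then `sparkG G = 2`. -/
lemma sparkG_eq_two_of_match (G : SimpleGraph (Fin n)) (hconn : G.Connected)
    (hn : 2 ≤ n) (u v : Fin n) (huv : u ≠ v)
    (hmatch : ∀ i, i ≠ u → i ≠ v → (G.Adj i u ↔ G.Adj i v)) :
    sparkG G = 2 := by
  set A : Matrix (Fin n) (Fin n) ℝ := fun i j =>
    if G.Adj i j ∨ (i = j ∧ (i = u ∨ i = v) ∧ G.Adj u v) then 1 else 0 with hAdef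
  have hA : SMatrixOf G A := by
    constructor
    · ext i j
      simp only [Matrix.transpose_apply, hAdef]
      refine if_congr ?_ rfl rfl
      constructor
      · rintro (h | ⟨rfl, h2, h3⟩)
        · exact Or.inl h.symm
        · exact Or.inr ⟨rfl, h2, h3⟩
      · rintro (h | ⟨rfl, h2, h3⟩)
        · exact Or.inl h.symm
        · exact Or.inr ⟨rfl, h2, h3⟩
    · intro i j hij
      by_cases hadj : G.Adj i j
      · simp [hAdef, hadj]
      · simp [hAdef, hadj, hij]
  have hcol : ∀ i, A i u = A i v := by
    intro i
    by_cases hiu : i = u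
    · subst hiu
      by_cases hadj : G.Adj i v
      · simp [hAdef, hadj]
      · simp [hAdef, hadj, huv]
    · by_cases hiv : i = v
      · subst hiv
        by_cases hadj : G.Adj u i
        · simp [hAdef, hadj, hadj.symm]
        · have h2 : ¬ G.Adj i u := fun h => hadj h.symm
          simp [hAdef, hadj, h2, huv.symm]
      · simp only [hAdef]
        have := hmatch i hiu hiv
        refine if_congr ?_ rfl rfl
        tauto
  set x : Fin n → ℝ := fun i => if i = u then 1 else if i = v then -1 else 0 with hxdef
  have hx0 : x ≠ 0 := by
    intro h
    have := congrFun h u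
    simp [hxdef] at this
  have hxsupp : {i | x i ≠ 0} = {u, v} := by
    ext i
    by_cases hiu : i = u
    · simp [hxdef, hiu]
    · by_cases hiv : i = v
      · simp [hxdef, hiu, hiv, huv.symm]
      · simp [hxdef, hiu, hiv]
  have hcard : {i | x i ≠ 0}.ncard = 2 := by
    rw [hxsupp]; exact Set.ncard_pair huv
  have hmul : A.mulVec x = 0 := by
    funext i
    rw [Matrix.mulVec, dotProduct]
    have hsum : ∑ j, A i j * x j = ∑ j ∈ ({u, v} : Finset (Fin n)), A i j * x j := by
      refine (Finset.sum_subset (Finset.subset_univ _) ?_).symm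
      intro j _ hj
      simp only [Finset.mem_insert, Finset.mem_singleton, not_or] at hj
      have : x j = 0 := by simp [hxdef, hj.1, hj.2]
      rw [this, mul_zero]
    rw [hsum, Finset.sum_pair huv]
    have hxu : x u = 1 := by simp [hxdef]
    have hxv : x v = -1 := by simp [hxdef, huv.symm]
    rw [hxu, hxv, hcol i]
    simp
  have hAspark : A.spark = 2 := by
    rw [Matrix.spark, if_pos ⟨x, hx0, hmul⟩]
    apply le_antisymm
    · exact Nat.sInf_le ⟨x, hx0, hmul, hcard⟩
    · refine le_csInf ⟨2, x, hx0, hmul, hcard⟩ ?_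
      rintro k ⟨y, hy0, hy, rfl⟩
      exact ncard_support_ge_two G hconn hn hA hy0 hy
  rw [sparkG]
  apply le_antisymm
  · exact Nat.sInf_le ⟨A, hA, hAspark⟩
  · refine le_csInf ⟨2, A, hA, hAspark⟩ ?_
    rintro s ⟨B, hB, rfl⟩
    exact spark_ge_two G hconn hn hB

end Aux

/-- a connected graph on at least two vertices has spark 2 iff it has
a pair of duplicate vertices. -/
theorem stmt11 {n : ℕ} (G : SimpleGraph (Fin n)) (hconn : G.Connected) (hn : 2 ≤ n) :
    sparkG G = 2 ↔ ∃ u v : Fin n, u ≠ v ∧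
      ((G.Adj u v ∧ (G.neighborSet u ∪ {u} : Set (Fin n)) = G.neighborSet v ∪ {v}) ∨
       (¬ G.Adj u v ∧ G.neighborSet u = G.neighborSet v)) := by
  constructor
  · intro hspark
    -- extract a matrix with spark 2
    have hGne : {s | ∃ A, SMatrixOf G A ∧ A.spark = s}.Nonempty := by
      by_contra hcontra
      rw [Set.not_nonempty_iff_eq_empty] at hcontra
      rw [sparkG, hcontra, Nat.sInf_empty] at hspark
      omega
    have h2 : (2 : ℕ) ∈ {s | ∃ A, SMatrixOf G A ∧ A.spark = s} := by
      rw [sparkG] at hspark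
      rw [← hspark]
      exact Nat.sInf_mem hGne
    obtain ⟨A, hA, hAspark⟩ := h2
    rw [Matrix.spark] at hAspark
    by_cases hex : ∃ x : Fin n → ℝ, x ≠ 0 ∧ A.mulVec x = 0
    swap
    · rw [if_neg hex, Fintype.card_fin] at hAspark; omega
    rw [if_pos hex] at hAspark
    have hSne : {k | ∃ x : Fin n → ℝ, x ≠ 0 ∧ A.mulVec x = 0 ∧ {i | x i ≠ 0}.ncard = k}.Nonempty := by
      obtain ⟨x, hx0, hx⟩ := hex
      exact ⟨_, x, hx0, hx, rfl⟩
    have h2' := Nat.sInf_mem hSne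
    rw [hAspark] at h2'
    obtain ⟨x, hx0, hx, hcard⟩ := h2'
    obtain ⟨u, v, huv, hset⟩ := Set.ncard_eq_two.mp hcard
    have hxu : x u ≠ 0 := by
      have : u ∈ ({u, v} : Set (Fin n)) := Or.inl rfl
      rw [← hset] at this; exact this
    have hxv : x v ≠ 0 := by
      have : v ∈ ({u, v} : Set (Fin n)) := Or.inr rfl
      rw [← hset] at this; exact this
    have hx0j : ∀ j, j ≠ u → j ≠ v → x j = 0 := by
      intro j h1 h2
      by_contra hc
      have : j ∈ ({u, v} : Set (Fin n)) := hset ▸ hc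
      rcases this with h | h
      · exact h1 h
      · exact h2 h
    have hrow : ∀ i, A i u * x u + A i v * x v = 0 := by
      intro i
      have h0 := congrFun hx i
      rw [Matrix.mulVec, dotProduct] at h0
      have hsum : ∑ j, A i j * x j = ∑ j ∈ ({u, v} : Finset (Fin n)), A i j * x j := by
        refine (Finset.sum_subset (Finset.subset_univ _) ?_).symm
        intro j _ hj
        simp only [Finset.mem_insert, Finset.mem_singleton, not_or] at hj
        rw [hx0j j hj.1 hj.2, mul_zero]
      rw [hsum, Finset.sum_pair huv] at h0
      exact h0
    have hmatch : ∀ i, i ≠ u → i ≠ v → (G.Adj i u ↔ G.Adj i v) := by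
      intro i hiu hiv
      rw [← hA.2 i u hiu, ← hA.2 i v hiv]
      have h1 : A i u * x u = -(A i v * x v) := by linarith [hrow i]
      constructor
      · intro h h2
        rw [h2, zero_mul, neg_zero] at h1
        exact mul_ne_zero h hxu h1
      · intro h h2
        rw [h2, zero_mul] at h1
        exact mul_ne_zero h hxv (by linarith)
    refine ⟨u, v, huv, ?_⟩
    by_cases hadj : G.Adj u v
    · left
      refine ⟨hadj, ?_⟩
      ext i
      by_cases hiu : i = u
      · subst hiu
        simp [hadj.symm]
      · by_cases hiv : i = v
        · subst hiv
          simp [hadj]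
        · simp only [Set.mem_union, SimpleGraph.mem_neighborSet, Set.mem_singleton_iff,
            hiu, hiv, or_false]
          rw [G.adj_comm u i, G.adj_comm v i]
          exact hmatch i hiu hiv
    · right
      refine ⟨hadj, ?_⟩
      ext i
      by_cases hiu : i = u
      · subst hiu
        simp only [SimpleGraph.mem_neighborSet]
        constructor
        · intro h; exact absurd h (G.loopless.irrefl i)
        · intro h; exact absurd h.symm hadj
      · by_cases hiv : i = v
        · subst hiv
          simp only [SimpleGraph.mem_neighborSet]
          constructor
          · intro h; exact absurd h hadj
          · intro h; exact absurd h (G.loopless.irrefl i)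
        · simp only [SimpleGraph.mem_neighborSet]
          rw [G.adj_comm u i, G.adj_comm v i]
          exact hmatch i hiu hiv
  · rintro ⟨u, v, huv, hcase⟩
    rcases hcase with ⟨hadj, hNeq⟩ | ⟨hnadj, hNeq⟩
    · refine sparkG_eq_two_of_match G hconn hn u v huv ?_
      intro i hiu hiv
      have := Set.ext_iff.mp hNeq i
      simp only [Set.mem_union, SimpleGraph.mem_neighborSet, Set.mem_singleton_iff,
        hiu, hiv, or_false] at this
      rw [G.adj_comm i u, G.adj_comm i v]
      exact this
    · refine sparkG_eq_two_of_match G hconn hn u v huv ?_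
      intro i hiu hiv
      have := Set.ext_iff.mp hNeq i
      simp only [SimpleGraph.mem_neighborSet] at this
      rw [G.adj_comm i u, G.adj_comm i v]
      exact this
end

section
/- Let G be a connected simple graph on n ≥ 3 vertices. If mr(G) ≤ 2 or κ(G) ≥ n−2, then G has a pair of duplicate vertices, i.e., there exist distinct vertices u, v such that either uv is an edge of G and N[u] = N[v], or uv is not an edge of G and N(u) = N(v). -/
open Matrix
open scoped Classical

private lemma exists_adj_of_connected' {V : Type*} {G : SimpleGraph V} (h : G.Connected)
    {i j : V} (hij : i ≠ j) : ∃ w, G.Adj i w := by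
  obtain ⟨p⟩ := h.preconnected i j
  cases p with
  | nil => exact absurd rfl hij
  | cons h _ => exact ⟨_, h⟩

private lemma dup_of_almost_complete' {n : ℕ} (G : SimpleGraph (Fin n)) (hn : 3 ≤ n)
    (hdeg : ∀ v x y : Fin n, x ≠ v → y ≠ v → ¬ G.Adj v x → ¬ G.Adj v y → x = y) :
    ∃ u v : Fin n, u ≠ v ∧
      ((G.Adj u v ∧ (G.neighborSet u ∪ {u} : Set (Fin n)) = G.neighborSet v ∪ {v}) ∨
       (¬ G.Adj u v ∧ G.neighborSet u = G.neighborSet v)) := by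
  by_cases hc : ∀ u v : Fin n, u ≠ v → G.Adj u v
  · have h01 : (⟨0, by omega⟩ : Fin n) ≠ ⟨1, by omega⟩ := by simp
    refine ⟨⟨0, by omega⟩, ⟨1, by omega⟩, h01, Or.inl ⟨hc _ _ h01, ?_⟩⟩
    have huniv : ∀ z : Fin n, G.neighborSet z ∪ {z} = Set.univ := by
      intro z
      ext w
      simp only [Set.mem_union, Set.mem_singleton_iff, SimpleGraph.mem_neighborSet,
        Set.mem_univ, iff_true]
      by_cases hw : w = z
      · exact Or.inr hw
      · exact Or.inl (hc z w (Ne.symm hw))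
    rw [huniv, huniv]
  · push_neg at hc
    obtain ⟨u, v, huv, hna⟩ := hc
    refine ⟨u, v, huv, Or.inr ⟨hna, ?_⟩⟩
    have key : ∀ a b : Fin n, a ≠ b → ¬ G.Adj a b → ∀ w, G.Adj a w ↔ (w ≠ a ∧ w ≠ b) := by
      intro a b hab hnab w
      constructor
      · intro hw
        refine ⟨hw.ne', fun hwb => hnab (hwb ▸ hw)⟩
      · rintro ⟨hwa, hwb⟩
        by_contra hnw
        exact hwb (hdeg a w b hwa (Ne.symm hab) hnw hnab)
    ext w
    simp only [SimpleGraph.mem_neighborSet]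
    rw [key u v huv hna w, key v u huv.symm (fun h => hna h.symm) w]
    tauto

private lemma hdeg_of_kappa' {n : ℕ} (G : SimpleGraph (Fin n)) (hn : 3 ≤ n)
    (h : n - 2 ≤ kappa G) :
    ∀ v x y : Fin n, x ≠ v → y ≠ v → ¬ G.Adj v x → ¬ G.Adj v y → x = y := by
  have hne : ({k | IsKConnected G k} : Set ℕ).Nonempty :=
    ⟨0, ⟨by simp only [Fintype.card_fin]; omega, fun S hS => absurd hS (by omega)⟩⟩
  have hbdd : BddAbove {k | IsKConnected G k} :=
    ⟨n, fun k hk => le_of_lt (by simpa using hk.1)⟩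
  have hK : IsKConnected G (kappa G) := Nat.sSup_mem hne hbdd
  intro v x y hx hy hnx hny
  by_contra hxy
  set T : Set (Fin n) := {v, x, y} with hT
  have hTcard : T.ncard = 3 := by
    rw [hT, Set.ncard_insert_of_notMem (by simp [Ne.symm hx, Ne.symm hy]),
      Set.ncard_insert_of_notMem (by simp [hxy]), Set.ncard_singleton]
  have hcompl : Tᶜ.ncard < kappa G := by
    have := Set.ncard_add_ncard_compl T
    simp only [Nat.card_eq_fintype_card, Fintype.card_fin] at this
    omega
  have hcon := hK.2 Tᶜ hcompl
  rw [compl_compl] at hcon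
  have hvT : v ∈ T := by simp [hT]
  have hxT : x ∈ T := by simp [hT]
  have hij : (⟨v, hvT⟩ : T) ≠ ⟨x, hxT⟩ := by simpa using Ne.symm hx
  obtain ⟨w, hw⟩ := exists_adj_of_connected' hcon hij
  have hadj : G.Adj v (w : Fin n) := hw
  have hwT : (w : Fin n) ∈ T := w.2
  rcases hwT with h1 | h1 | h1
  · exact G.irrefl (h1 ▸ hadj)
  · exact hnx (h1 ▸ hadj)
  · exact hny (h1 ▸ hadj)

private lemma mr_branch' {n : ℕ} (G : SimpleGraph (Fin n)) (hconn : G.Connected) (hn : 3 ≤ n)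
    (h : mr G ≤ 2) :
    (∃ i j : Fin n, i ≠ j ∧
        ((G.Adj i j ∧ (G.neighborSet i ∪ {i} : Set (Fin n)) = G.neighborSet j ∪ {j}) ∨
         (¬ G.Adj i j ∧ G.neighborSet i = G.neighborSet j))) ∨
      (∀ v x y : Fin n, x ≠ v → y ≠ v → ¬ G.Adj v x → ¬ G.Adj v y → x = y) := by
  -- the set of achievable ranks is nonempty
  have hSne : ({r | ∃ A, SMatrixOf G A ∧ A.rank = r} : Set ℕ).Nonempty := by
    refine ⟨_, (fun i j => if G.Adj i j then (1:ℝ) else 0), ⟨?_, ?_⟩, rfl⟩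
    · ext i j
      show (if G.Adj j i then (1:ℝ) else 0) = if G.Adj i j then 1 else 0
      rw [SimpleGraph.adj_comm]
    · intro i j _
      by_cases hij : G.Adj i j <;> simp [hij]
  obtain ⟨A, hA, hrank⟩ : ∃ A, SMatrixOf G A ∧ A.rank = mr G := Nat.sInf_mem hSne
  have hr2 : A.rank ≤ 2 := hrank ▸ h
  set col : Fin n → (Fin n → ℝ) := fun j i => A i j with hcol
  have hcolmem : ∀ j, col j ∈ LinearMap.range A.mulVecLin := by
    intro j
    refine ⟨Pi.single j 1, ?_⟩
    ext i
    simp [Matrix.mulVecLin_apply, Matrix.mulVec_single, hcol]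
  -- every vertex has a neighbor
  have hnbr : ∀ v : Fin n, ∃ w, G.Adj v w := by
    intro v
    have : Nontrivial (Fin n) := Fin.nontrivial_iff_two_le.mpr (by omega)
    obtain ⟨j, hj⟩ := exists_ne v
    exact exists_adj_of_connected' hconn (Ne.symm hj)
  have hcolnz : ∀ j, col j ≠ 0 := by
    intro j hzero
    obtain ⟨w, hw⟩ := hnbr j
    have : A w j ≠ 0 := (hA.2 w j hw.ne').mpr hw.symm
    exact this (congrFun hzero w)
  by_cases hP : ∃ i j : Fin n, i ≠ j ∧ ∃ c : ℝ, col i = c • col j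
  · -- parallel columns: duplicate vertices
    left
    obtain ⟨i, j, hij, c, hc⟩ := hP
    have hc0 : c ≠ 0 := by
      rintro rfl
      exact hcolnz i (by simpa using hc)
    have hcc : ∀ k, A k i = c * A k j := by
      intro k
      have := congrFun hc k
      simpa [hcol] using this
    have hmid : ∀ k, k ≠ i → k ≠ j → (G.Adj i k ↔ G.Adj j k) := by
      intro k hki hkj
      rw [SimpleGraph.adj_comm, SimpleGraph.adj_comm G j k,
        ← hA.2 k i hki, ← hA.2 k j hkj, hcc k, mul_ne_zero_iff]
      exact and_iff_right hc0
    by_cases hadj : G.Adj i j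
    · refine ⟨i, j, hij, Or.inl ⟨hadj, ?_⟩⟩
      ext w
      simp only [Set.mem_union, Set.mem_singleton_iff, SimpleGraph.mem_neighborSet]
      by_cases hwi : w = i
      · subst hwi
        simp [hadj.symm]
      · by_cases hwj : w = j
        · subst hwj
          simp [hadj]
        · simp only [hwi, hwj, or_false]
          exact hmid w hwi hwj
    · refine ⟨i, j, hij, Or.inr ⟨hadj, ?_⟩⟩
      ext w
      simp only [SimpleGraph.mem_neighborSet]
      by_cases hwi : w = i
      · subst hwi
        exact iff_of_false (G.irrefl) (fun h2 => hadj h2.symm)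
      · by_cases hwj : w = j
        · subst hwj
          exact iff_of_false hadj (G.irrefl)
        · exact hmid w hwi hwj
  · -- all columns pairwise independent
    right
    have hind : ∀ i j : Fin n, i ≠ j → LinearIndependent ℝ ![col i, col j] := by
      intro i j hij
      rw [LinearIndependent.pair_iff]
      intro s t hst
      by_cases hs : s = 0
      · subst hs
        refine ⟨rfl, ?_⟩
        by_contra ht
        apply hcolnz j
        have := congrArg (fun z => t⁻¹ • z) hst
        simpa [smul_smul, inv_mul_cancel₀ ht] using this
      · exfalso
        apply hP
        refine ⟨i, j, hij, -t/s, ?_⟩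
        have : s • col i = -(t • col j) := by
          rw [← eq_neg_iff_add_eq_zero] at hst; exact hst
        have := congrArg (fun z => s⁻¹ • z) this
        simp only [smul_smul, inv_mul_cancel₀ hs, one_smul] at this
        rw [this]
        ext w
        simp [div_eq_mul_inv]
        ring
    intro v x y hx hy hnx hny
    by_contra hxy
    have hAvx : A v x = 0 := by
      by_contra h0
      exact hnx ((hA.2 v x (Ne.symm hx)).mp h0)
    have hAvy : A v y = 0 := by
      by_contra h0
      exact hny ((hA.2 v y (Ne.symm hy)).mp h0)
    have hle : Submodule.span ℝ ({col x, col y} : Set (Fin n → ℝ)) ≤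
        LinearMap.range A.mulVecLin := by
      rw [Submodule.span_le]
      rintro z (rfl | rfl)
      · exact hcolmem x
      · exact hcolmem y
    have hfr : Module.finrank ℝ (Submodule.span ℝ ({col x, col y} : Set (Fin n → ℝ))) = 2 := by
      have h2 := finrank_span_eq_card (hind x y hxy)
      rw [show Set.range ![col x, col y] = {col x, col y} from by
        simp [Matrix.range_cons, Matrix.range_empty, Set.pair_comm]] at h2
      simpa using h2
    have hspan : Submodule.span ℝ ({col x, col y} : Set (Fin n → ℝ)) =
        LinearMap.range A.mulVecLin := by
      refine Submodule.eq_of_le_of_finrank_le hle ?_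
      rw [hfr]
      exact hr2
    obtain ⟨w, hw⟩ := hnbr v
    have hmem : col w ∈ Submodule.span ℝ ({col x, col y} : Set (Fin n → ℝ)) :=
      hspan ▸ hcolmem w
    obtain ⟨s, t, hst⟩ := Submodule.mem_span_pair.mp hmem
    have : A v w = 0 := by
      have := congrFun hst v
      simp only [Pi.add_apply, Pi.smul_apply, smul_eq_mul, hcol] at this
      rw [← this, hAvx, hAvy]
      ring
    exact ((hA.2 v w hw.ne).mpr hw) this
/-- a connected graph on `n ≥ 3` vertices with `mr(G) ≤ 2` or
`κ(G) ≥ n - 2` has a pair of duplicate vertices. -/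
theorem stmt12 {n : ℕ} (G : SimpleGraph (Fin n)) (hconn : G.Connected) (hn : 3 ≤ n)
    (h : mr G ≤ 2 ∨ n - 2 ≤ kappa G) :
    ∃ u v : Fin n, u ≠ v ∧
      ((G.Adj u v ∧ (G.neighborSet u ∪ {u} : Set (Fin n)) = G.neighborSet v ∪ {v}) ∨
       (¬ G.Adj u v ∧ G.neighborSet u = G.neighborSet v)) := by
  rcases h with h | h
  · rcases mr_branch' G hconn hn h with hdup | hdeg
    · exact hdup
    · exact dup_of_almost_complete' G hn hdeg
  · exact dup_of_almost_complete' G hn (hdeg_of_kappa' G hn h)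
end

section
/- Let G be a connected simple graph on n ≥ 3 vertices with spark(G) ≥ 3. Then mr(G) ≥ 3 and κ(G) ≤ n−3. -/
open Matrix
open scoped Classical

section Helpers

variable {n : ℕ}

/-- Every vertex of a connected graph with at least two vertices has a neighbor. -/
lemma neighbor_of_connected (G : SimpleGraph (Fin n)) (hc : G.Connected) (hn : 2 ≤ n)
    (v : Fin n) : ∃ u, G.Adj v u := by
  obtain ⟨u, hu⟩ := Fintype.exists_ne_of_one_lt_card (by simp; omega) v
  obtain ⟨p⟩ := hc.preconnected v u
  cases p with
  | nil => exact absurd rfl hu.symm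
  | cons h' p' => exact ⟨_, h'⟩

/-- If some matrix in `S(G)` has a nonzero null vector supported on at most two
coordinates, then `sparkG G ≤ 2`. -/
lemma sparkG_le_two (G : SimpleGraph (Fin n)) (A : Matrix (Fin n) (Fin n) ℝ)
    (hA : SMatrixOf G A) (x : Fin n → ℝ) (hx : x ≠ 0) (h0 : A.mulVec x = 0)
    (i j : Fin n) (hsupp : ∀ l, x l ≠ 0 → l = i ∨ l = j) : sparkG G ≤ 2 := by
  have hsub : {l | x l ≠ 0} ⊆ ({i, j} : Set (Fin n)) := by
    intro l hl
    rcases hsupp l hl with h | h <;> simp [h]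
  have hcard : {l | x l ≠ 0}.ncard ≤ 2 := by
    calc {l | x l ≠ 0}.ncard ≤ ({i, j} : Set (Fin n)).ncard :=
          Set.ncard_le_ncard hsub (Set.toFinite _)
      _ ≤ ({j} : Set (Fin n)).ncard + 1 := Set.ncard_insert_le _ _
      _ ≤ 2 := by rw [Set.ncard_singleton]
  have hAspark : A.spark ≤ 2 := by
    unfold Matrix.spark
    rw [if_pos ⟨x, hx, h0⟩]
    exact le_trans (Nat.sInf_le ⟨x, hx, h0, rfl⟩) hcard
  exact le_trans (Nat.sInf_le ⟨A, hA, rfl⟩) hAspark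

/-- Twins (vertices with the same neighbors outside the pair) force `sparkG G ≤ 2`. -/
lemma twins_sparkG_le_two (G : SimpleGraph (Fin n)) (i j : Fin n) (hij : i ≠ j)
    (htw : ∀ k, k ≠ i → k ≠ j → (G.Adj k i ↔ G.Adj k j)) : sparkG G ≤ 2 := by
  classical
  set c : ℝ := if G.Adj i j then 1 else 0 with hc
  set A : Matrix (Fin n) (Fin n) ℝ :=
    fun k l => if G.Adj k l then 1 else if k = l ∧ (k = i ∨ k = j) then c else 0 with hAdef
  have hA : SMatrixOf G A := by
    constructor
    · apply Matrix.IsSymm.ext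
      intro k l
      show A l k = A k l
      by_cases hadj : G.Adj k l
      · simp only [hAdef]
        rw [if_pos hadj.symm, if_pos hadj]
      · have hadj' : ¬ G.Adj l k := fun hh => hadj hh.symm
        by_cases hkl : k = l
        · subst hkl; rfl
        · simp only [hAdef]
          rw [if_neg hadj', if_neg hadj, if_neg (fun hh => hkl hh.1.symm),
            if_neg (fun hh => hkl hh.1)]
    · intro a b hab
      constructor
      · intro hne
        by_contra hadj
        apply hne
        simp only [hAdef]
        rw [if_neg hadj, if_neg (fun hh => hab hh.1)]
      · intro hadj
        simp only [hAdef]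
        rw [if_pos hadj]
        exact one_ne_zero
  set x : Fin n → ℝ := Pi.single i 1 + Pi.single j (-1) with hxdef
  have hxi : x i = 1 := by
    rw [hxdef]
    simp [Pi.single_eq_of_ne hij]
  have hx : x ≠ 0 := by
    intro hx0
    have := congrFun hx0 i
    rw [hxi] at this
    simp at this
  have hAii : A i i = c := by
    simp [hAdef, G.loopless.irrefl i]
  have hAij : A i j = c := by
    by_cases hadj : G.Adj i j <;> simp [hAdef, hadj, hc, hij]
  have hAji : A j i = c := by
    by_cases hadj : G.Adj i j
    · simp [hAdef, hadj.symm, hc, hadj]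
    · have : ¬ G.Adj j i := fun hh => hadj hh.symm
      simp [hAdef, this, hc, hadj, hij.symm]
  have hAjj : A j j = c := by
    simp [hAdef, G.loopless.irrefl j]
  have h0 : A.mulVec x = 0 := by
    have hsplit : A.mulVec x = (fun l => A l i * 1) + (fun l => A l j * (-1)) := by
      rw [hxdef, Matrix.mulVec_add, Matrix.mulVec_single, Matrix.mulVec_single]
      funext l; simp [Matrix.col_apply, op_smul_eq_mul]
    rw [hsplit]
    funext k
    simp only [Pi.add_apply, Pi.zero_apply, mul_one, mul_neg_one]
    by_cases hki : k = i
    · subst hki; rw [hAii, hAij]; ring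
    · by_cases hkj : k = j
      · subst hkj; rw [hAji, hAjj]; ring
      · have hiff := htw k hki hkj
        have h1 : A k i = (if G.Adj k i then (1:ℝ) else 0) := by
          simp only [hAdef]
          by_cases hadj : G.Adj k i
          · rw [if_pos hadj, if_pos hadj]
          · rw [if_neg hadj, if_neg hadj, if_neg (fun hh => hki hh.1)]
        have h2 : A k j = (if G.Adj k j then (1:ℝ) else 0) := by
          simp only [hAdef]
          by_cases hadj : G.Adj k j
          · rw [if_pos hadj, if_pos hadj]
          · rw [if_neg hadj, if_neg hadj, if_neg (fun hh => hkj hh.1)]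
        rw [h1, h2]
        by_cases hadj : G.Adj k i
        · rw [if_pos hadj, if_pos (hiff.mp hadj)]; ring
        · rw [if_neg hadj, if_neg (fun hh => hadj (hiff.mpr hh))]; ring
  refine sparkG_le_two G A hA x hx h0 i j ?_
  intro l hl
  by_contra hcon
  push_neg at hcon
  apply hl
  simp [hxdef, Pi.single_eq_of_ne hcon.1, Pi.single_eq_of_ne hcon.2]

/-- The adjacency matrix belongs to `S(G)`. -/
lemma adjMatrix_SMatrixOf (G : SimpleGraph (Fin n)) :
    SMatrixOf G (fun k l => if G.Adj k l then (1:ℝ) else 0) := by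
  classical
  constructor
  · apply Matrix.IsSymm.ext
    intro k l
    by_cases hadj : G.Adj l k
    · rw [if_pos hadj, if_pos hadj.symm]
    · rw [if_neg hadj, if_neg (fun hh => hadj hh.symm)]
  · intro a b _
    by_cases hadj : G.Adj a b <;> simp [hadj]

/-- If every vertex has at most one non-neighbor, then `G` has twins. -/
lemma twins_of_min_degree (G : SimpleGraph (Fin n)) (hn : 3 ≤ n)
    (hdeg : ∀ v j k : Fin n, j ≠ k → j ≠ v → k ≠ v → ¬ G.Adj v j → G.Adj v k) :
    ∃ i j : Fin n, i ≠ j ∧ ∀ k, k ≠ i → k ≠ j → (G.Adj k i ↔ G.Adj k j) := by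
  by_cases hC : ∃ p q : Fin n, p ≠ q ∧ ¬ G.Adj p q
  · obtain ⟨i, j, hij, hna⟩ := hC
    refine ⟨i, j, hij, fun k hki hkj => ?_⟩
    have h1 : G.Adj i k := hdeg i j k (fun hh => hkj hh.symm) hij.symm hki hna
    have h2 : G.Adj j k :=
      hdeg j i k (fun hh => hki hh.symm) hij hkj (fun hh => hna hh.symm)
    exact iff_of_true h1.symm h2.symm
  · push_neg at hC
    refine ⟨⟨0, by omega⟩, ⟨1, by omega⟩, by simp, fun k hki hkj => ?_⟩
    exact iff_of_true (hC k _ hki) (hC k _ hkj)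

end Helpers

/-- a connected graph on `n ≥ 3` vertices with `spark(G) ≥ 3` has
`mr(G) ≥ 3` and `κ(G) ≤ n - 3`. -/
theorem stmt13 {n : ℕ} (G : SimpleGraph (Fin n)) (hconn : G.Connected) (hn : 3 ≤ n)
    (h : 3 ≤ sparkG G) :
    3 ≤ mr G ∧ kappa G ≤ n - 3 := by
  classical
  have hkey : ¬ sparkG G ≤ 2 := by omega
  constructor
  · -- mr G ≥ 3
    by_contra hlt
    push_neg at hlt
    have hne : {r | ∃ A, SMatrixOf G A ∧ A.rank = r}.Nonempty :=
      ⟨_, _, adjMatrix_SMatrixOf G, rfl⟩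
    have hmem : mr G ∈ {r | ∃ A, SMatrixOf G A ∧ A.rank = r} := Nat.sInf_mem hne
    obtain ⟨A, hA, hrank⟩ := hmem
    have hrank2 : A.rank ≤ 2 := by omega
    by_cases hcase : ∃ v j k : Fin n, j ≠ k ∧ j ≠ v ∧ k ≠ v ∧ ¬ G.Adj v j ∧ ¬ G.Adj v k
    · obtain ⟨v, j, k, hjk, hjv, hkv, hnj, hnk⟩ := hcase
      obtain ⟨u, hu⟩ := neighbor_of_connected G hconn (by omega) v
      have hAvj : A v j = 0 := by
        by_contra hh
        exact hnj ((hA.2 v j (fun e => hjv e.symm)).mp hh)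
      have hAvk : A v k = 0 := by
        by_contra hh
        exact hnk ((hA.2 v k (fun e => hkv e.symm)).mp hh)
      have hAvu : A v u ≠ 0 := (hA.2 v u hu.ne).mpr hu
      -- three columns of a rank ≤ 2 matrix are dependent
      set f : Fin 3 → (Fin n → ℝ) :=
        ![fun l => A l u, fun l => A l j, fun l => A l k] with hf
      have hnli : ¬ LinearIndependent ℝ f := by
        intro hli
        have h3 : Module.finrank ℝ (Submodule.span ℝ (Set.range f)) = 3 := by
          rw [finrank_span_eq_card hli]; simp
        have hle : Submodule.span ℝ (Set.range f) ≤ LinearMap.range A.mulVecLin := by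
          rw [Submodule.span_le]
          rintro _ ⟨t, rfl⟩
          fin_cases t
          · exact ⟨Pi.single u 1, by
              funext l
              simp [hf, Matrix.mulVecLin, Matrix.mulVec_single]⟩
          · exact ⟨Pi.single j 1, by
              funext l
              simp [hf, Matrix.mulVecLin, Matrix.mulVec_single]⟩
          · exact ⟨Pi.single k 1, by
              funext l
              simp [hf, Matrix.mulVecLin, Matrix.mulVec_single]⟩
        have hmono := Submodule.finrank_mono hle
        have hr : Module.finrank ℝ (LinearMap.range A.mulVecLin) = A.rank := rfl
        rw [h3, hr] at hmono
        omega
      obtain ⟨g, hsum, t, hgt⟩ := Fintype.not_linearIndependent_iff.mp hnli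
      rw [Fin.sum_univ_three] at hsum
      have hf0 : f 0 = fun l => A l u := rfl
      have hf1 : f 1 = fun l => A l j := rfl
      have hf2 : f 2 = fun l => A l k := rfl
      have hv := congrFun hsum v
      rw [hf0, hf1, hf2] at hv
      simp only [Pi.add_apply, Pi.smul_apply, smul_eq_mul, Pi.zero_apply] at hv
      rw [hAvj, hAvk] at hv
      have hg0 : g 0 = 0 := by
        have : g 0 * A v u = 0 := by linarith [hv]
        rcases mul_eq_zero.mp this with h' | h'
        · exact h'
        · exact absurd h' hAvu
      set x : Fin n → ℝ := Pi.single j (g 1) + Pi.single k (g 2) with hxdef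
      have hxj : x j = g 1 := by
        rw [hxdef]
        simp [Pi.single_eq_of_ne hjk]
      have hxk : x k = g 2 := by
        rw [hxdef]
        simp [Pi.single_eq_of_ne (fun e => hjk e.symm)]
      have hg12 : g 1 ≠ 0 ∨ g 2 ≠ 0 := by
        by_contra hcc
        push_neg at hcc
        apply hgt
        have hall : ∀ s : Fin 3, g s = 0 := by
          intro s
          fin_cases s
          · exact hg0
          · exact hcc.1
          · exact hcc.2
        exact hall t
      have hx : x ≠ 0 := by
        intro hx0
        rcases hg12 with h1 | h2
        · exact h1 (by rw [← hxj, hx0]; rfl)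
        · exact h2 (by rw [← hxk, hx0]; rfl)
      have h0 : A.mulVec x = 0 := by
        rw [hxdef, Matrix.mulVec_add, Matrix.mulVec_single, Matrix.mulVec_single]
        funext l
        have hl := congrFun hsum l
        rw [hf0, hf1, hf2] at hl
        simp only [Pi.add_apply, Pi.smul_apply, smul_eq_mul, Pi.zero_apply] at hl
        rw [hg0] at hl
        simp only [Pi.add_apply, Pi.zero_apply, Pi.smul_apply, Matrix.col_apply, op_smul_eq_mul]
        ring_nf
        ring_nf at hl
        linarith [hl]
      have hsupp : ∀ l, x l ≠ 0 → l = j ∨ l = k := by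
        intro l hl
        by_contra hcon
        push_neg at hcon
        apply hl
        simp [hxdef, Pi.single_eq_of_ne hcon.1, Pi.single_eq_of_ne hcon.2]
      exact hkey (sparkG_le_two G A hA x hx h0 j k hsupp)
    · push_neg at hcase
      obtain ⟨i, j, hij, htw⟩ := twins_of_min_degree G hn (by
        intro v a b hab hav hbv hna
        exact hcase v a b hab hav hbv hna)
      exact hkey (twins_sparkG_le_two G i j hij htw)
  · -- kappa G ≤ n - 3
    apply csSup_le'
    rintro k ⟨hklt, hS⟩
    rw [Fintype.card_fin] at hklt
    by_contra hk
    push_neg at hk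
    have hk2 : n - 2 ≤ k := by omega
    have hdeg : ∀ v a b : Fin n, a ≠ b → a ≠ v → b ≠ v → ¬ G.Adj v a → G.Adj v b := by
      intro v a b hab hav hbv hna
      by_contra hnb
      set S : Set (Fin n) := G.neighborSet v with hSdef
      have hvS : v ∉ S := by simp [hSdef]
      have haS : a ∉ S := by simp [hSdef]; exact hna
      have hbS : b ∉ S := by simp [hSdef]; exact hnb
      have hScard : S.ncard < k := by
        have hdisj : Disjoint S ({v, a, b} : Set (Fin n)) := by
          rw [Set.disjoint_right]
          rintro y (rfl | rfl | rfl) <;> assumption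
        have h3 : ({v, a, b} : Set (Fin n)).ncard = 3 := by
          rw [Set.ncard_insert_of_notMem (by simp [hav.symm, hbv.symm]) (Set.toFinite _),
            Set.ncard_pair hab]
        have hun : S.ncard + 3 ≤ n := by
          rw [← h3, ← Set.ncard_union_eq hdisj (Set.toFinite _) (Set.toFinite _)]
          calc (S ∪ {v, a, b}).ncard ≤ (Set.univ : Set (Fin n)).ncard :=
                Set.ncard_le_ncard (Set.subset_univ _) (Set.toFinite _)
            _ = n := by rw [Set.ncard_univ, Nat.card_eq_fintype_card, Fintype.card_fin]
        omega
      have hconn' := hS S hScard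
      have hvSc : v ∈ Sᶜ := hvS
      have haSc : a ∈ Sᶜ := haS
      obtain ⟨p⟩ := hconn'.preconnected ⟨v, hvSc⟩ ⟨a, haSc⟩
      have hpnil : ¬ p.Nil := by
        apply SimpleGraph.Walk.not_nil_of_ne
        intro hh
        exact hav (congrArg Subtype.val hh).symm
      obtain ⟨w', hadj, q, rfl⟩ := SimpleGraph.Walk.not_nil_iff.mp hpnil
      have hGadj : G.Adj v w'.val := hadj
      exact w'.2 hGadj
    obtain ⟨i, j, hij, htw⟩ := twins_of_min_degree G hn hdeg
    exact hkey (twins_sparkG_le_two G i j hij htw)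
end

section
/- Let Q_3 be the 3-dimensional hypercube graph (the Cartesian product C_4 □ P_2 of the 4-cycle with the path on two vertices), a graph on 8 vertices. If A ∈ S(Q_3) is positive semidefinite and rank(A) = 4, then spark(A) = 4. -/
open Matrix
open scoped Classical

/-! ### Auxiliary material for `stmt15` -/

abbrev QV := Fin 4 × Fin 2

/-- Explicit decidable adjacency for `Q₃ = C₄ □ P₂`. -/
def q3Adj (u v : QV) : Prop :=
  ((u.1 - v.1 = 1 ∨ v.1 - u.1 = 1) ∧ u.2 = v.2) ∨
  ((u.2.val + 1 = v.2.val ∨ v.2.val + 1 = u.2.val) ∧ u.1 = v.1)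

instance (u v : QV) : Decidable (q3Adj u v) := by unfold q3Adj; infer_instance

lemma q3_adj_iff (u v : QV) :
    (SimpleGraph.boxProd (SimpleGraph.cycleGraph 4) (SimpleGraph.pathGraph 2)).Adj u v ↔
      q3Adj u v := by
  rw [SimpleGraph.boxProd_adj]
  have h1 : (SimpleGraph.cycleGraph 4).Adj u.1 v.1 ↔ (u.1 - v.1 = 1 ∨ v.1 - u.1 = 1) :=
    SimpleGraph.cycleGraph_adj (n := 2)
  rw [h1, SimpleGraph.pathGraph_adj, q3Adj]

set_option maxRecDepth 40000 in
lemma q3_fort_small : ∀ F : Finset QV, F.card ≤ 3 →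
    (∃ i ∈ F, ∃ j ∈ F, q3Adj i j) →
    ∃ v, v ∉ F ∧ ∃ w ∈ F, q3Adj v w ∧ ∀ u ∈ F, q3Adj v u → u = w := by decide

lemma q3_exists_neighbor : ∀ v : QV, ∃ w : QV, q3Adj v w := by decide

/-- If a "column" of `B` has zero self-inner-product then its inner product with
every other column vanishes. -/
lemma colZero {n : Type*} [Fintype n] (B : Matrix n n ℝ) (i : n)
    (h : ∑ k, B k i * B k i = 0) (j : n) : ∑ k, B k i * B k j = 0 := by
  have hz : ∀ k : n, B k i = 0 := by
    intro k
    have := (Finset.sum_eq_zero_iff_of_nonneg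
      (fun k _ => mul_self_nonneg (B k i))).mp h k (Finset.mem_univ k)
    exact mul_self_eq_zero.mp this
  simp [hz]

/-- Dot product with a fixed vector, as a linear map. -/
noncomputable def dotL {n : Type*} [Fintype n] (a : n → ℝ) : (n → ℝ) →ₗ[ℝ] ℝ where
  toFun y := ∑ k, a k * y k
  map_add' y z := by simp [mul_add, Finset.sum_add_distrib]
  map_smul' c y := by simp [Finset.mul_sum, mul_left_comm]


/-- a positive semidefinite matrix of rank 4 for the hypercube `Q₃ = C₄ □ P₂`
has spark 4. -/
theorem stmt15 (A : Matrix (Fin 4 × Fin 2) (Fin 4 × Fin 2) ℝ)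
    (hA : SMatrixOf (SimpleGraph.boxProd (SimpleGraph.cycleGraph 4) (SimpleGraph.pathGraph 2)) A)
    (hpsd : A.PosSemidef) (hr : A.rank = 4) :
    A.spark = 4 := by
  obtain ⟨B, hB⟩ : ∃ B : Matrix QV QV ℝ, A = Bᴴ * B := by
    open scoped MatrixOrder in
    exact ⟨CFC.sqrt A, by rw [(CFC.sqrt_nonneg A).posSemidef.isHermitian.eq, CFC.sqrt_mul_sqrt_self A hpsd.nonneg]⟩
  have hAB : ∀ i j, A i j = ∑ k, B k i * B k j := by
    intro i j
    rw [hB, Matrix.mul_apply]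
    simp [Matrix.conjTranspose_apply]
  -- Step B: every nonzero null vector has support of size at least 4.
  have stepB : ∀ y : QV → ℝ, y ≠ 0 → A.mulVec y = 0 → 4 ≤ {i | y i ≠ 0}.ncard := by
    intro y hy0 hAy
    set F : Finset QV := Finset.univ.filter (fun i => y i ≠ 0) with hF
    have hmem : ∀ i, i ∈ F ↔ y i ≠ 0 := by intro i; simp [hF]
    have hcard : {i | y i ≠ 0}.ncard = F.card := by
      rw [Set.ncard_eq_toFinset_card', Set.toFinset_setOf]
    rw [hcard]
    by_contra hlt
    push_neg at hlt
    have hF3 : F.card ≤ 3 := by omega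
    have hmv : ∀ v : QV, A.mulVec y v = ∑ u, A v u * y u := fun v => rfl
    by_cases hedge : ∃ i ∈ F, ∃ j ∈ F, q3Adj i j
    · obtain ⟨v, hvF, w, hwF, hvw, huniq⟩ := q3_fort_small F hF3 hedge
      have hrow : ∑ u, A v u * y u = A v w * y w := by
        refine Finset.sum_eq_single w ?_ (fun h => absurd (Finset.mem_univ w) h)
        intro u _ hu
        by_cases hyu : y u = 0
        · simp [hyu]
        · have huF : u ∈ F := (hmem u).2 hyu
          by_cases hadj : q3Adj v u
          · exact absurd (huniq u huF hadj) hu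
          · have hne : v ≠ u := by rintro rfl; exact hvF huF
            have hz : A v u = 0 := by
              by_contra h0
              exact hadj ((q3_adj_iff v u).mp ((hA.2 v u hne).1 h0))
            simp [hz]
      have h1 : A v w ≠ 0 :=
        (hA.2 v w (by rintro rfl; exact hvF hwF)).2 ((q3_adj_iff v w).mpr hvw)
      have h2 : y w ≠ 0 := (hmem w).1 hwF
      have h0 : (0 : ℝ) = A v w * y w := by
        rw [← hrow, ← hmv v, hAy]; rfl
      exact (mul_ne_zero h1 h2) h0.symm
    · push_neg at hedge
      obtain ⟨i, hyi⟩ := Function.ne_iff.mp hy0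
      have hiF : i ∈ F := (hmem i).2 hyi
      have hrow : ∑ u, A i u * y u = A i i * y i := by
        refine Finset.sum_eq_single i ?_ (fun h => absurd (Finset.mem_univ i) h)
        intro u _ hu
        by_cases hyu : y u = 0
        · simp [hyu]
        · have huF : u ∈ F := (hmem u).2 hyu
          have hnadj := hedge i hiF u huF
          have hz : A i u = 0 := by
            by_contra h0
            exact hnadj ((q3_adj_iff i u).mp ((hA.2 i u (Ne.symm hu)).1 h0))
          simp [hz]
      have h0 : (0 : ℝ) = A i i * y i := by
        rw [← hrow, ← hmv i, hAy]; rfl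
      have hAii : A i i = 0 := by
        rcases mul_eq_zero.mp h0.symm with h | h
        · exact h
        · exact absurd h hyi
      obtain ⟨w, hw⟩ := q3_exists_neighbor i
      have hirr : ∀ v : QV, ¬ q3Adj v v := by decide
      have hiw : i ≠ w := by rintro rfl; exact hirr i hw
      have hz : A i w = 0 := by
        rw [hAB i w]
        exact colZero B i (by rw [← hAB]; exact hAii) w
      exact (hA.2 i w hiw).2 ((q3_adj_iff i w).mpr hw) hz
  -- Step A: construct a null vector with support of size at most 4.
  set v0 : QV := (0, 0) with hv0
  set b : QV → (QV → ℝ) := fun j i => B i j with hbdef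
  have hbv : ∀ j, B.mulVecLin (Pi.single j 1) = b j := by
    intro j; ext i
    simp [Matrix.mulVecLin_apply, Matrix.mulVec_single, hbdef]
  have hBA : B.rank = 4 := by
    have h1 : (Bᴴ * B).rank = B.rank := Matrix.rank_conjTranspose_mul_self B
    rw [← hB] at h1
    rw [h1] at hr
    exact hr
  have hrankW : Module.finrank ℝ (LinearMap.range B.mulVecLin) = 4 := hBA
  set f : (QV → ℝ) →ₗ[ℝ] ℝ := dotL (b v0) with hf
  have hfb : ∀ j, f (b j) = A v0 j := by
    intro j
    simp only [hf, dotL, LinearMap.coe_mk, AddHom.coe_mk, hbdef]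
    exact (hAB v0 j).symm
  have hbW : ∀ j, b j ∈ LinearMap.range B.mulVecLin := fun j => ⟨Pi.single j 1, hbv j⟩
  have hAv00 : A v0 v0 ≠ 0 := by
    intro h0
    have hz : A v0 ((1 : Fin 4), (0 : Fin 2)) = 0 := by
      rw [hAB]
      exact colZero B v0 (by rw [← hAB]; exact h0) _
    have hadj : q3Adj v0 ((1 : Fin 4), (0 : Fin 2)) := by decide
    exact (hA.2 v0 _ (by decide)).2 ((q3_adj_iff _ _).mpr hadj) hz
  set U : Submodule ℝ (QV → ℝ) := LinearMap.range B.mulVecLin ⊓ LinearMap.ker f with hU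
  have hUlt : U < LinearMap.range B.mulVecLin := by
    refine lt_of_le_of_ne inf_le_left (fun hEq => ?_)
    have hbU : b v0 ∈ U := hEq ▸ hbW v0
    rw [hU, Submodule.mem_inf, LinearMap.mem_ker, hfb] at hbU
    exact hAv00 hbU.2
  have hU3 : Module.finrank ℝ U ≤ 3 := by
    have := Submodule.finrank_lt_finrank_of_lt hUlt
    rw [hrankW] at this
    omega
  set s : Fin 4 → QV := ![(2, 0), (1, 1), (2, 1), (3, 1)] with hs
  have hsU : ∀ k, b (s k) ∈ U := by
    intro k
    rw [hU, Submodule.mem_inf, LinearMap.mem_ker, hfb]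
    refine ⟨hbW _, ?_⟩
    have hna : ¬ q3Adj v0 (s k) := by fin_cases k <;> decide
    have hne : v0 ≠ s k := by fin_cases k <;> decide
    by_contra h0
    exact hna ((q3_adj_iff v0 (s k)).mp ((hA.2 v0 (s k) hne).1 h0))
  have hdep : ¬ LinearIndependent ℝ (fun k : Fin 4 => b (s k)) := by
    intro hli
    have h4 : Module.finrank ℝ (Submodule.span ℝ (Set.range fun k : Fin 4 => b (s k))) = 4 := by
      rw [finrank_span_eq_card hli, Fintype.card_fin]
    have hle : Submodule.span ℝ (Set.range fun k : Fin 4 => b (s k)) ≤ U :=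
      Submodule.span_le.mpr (by rintro _ ⟨k, rfl⟩; exact hsU k)
    have := Submodule.finrank_mono hle
    omega
  obtain ⟨c, hsum, k0, hk0⟩ := Fintype.not_linearIndependent_iff.mp hdep
  set x : QV → ℝ := ∑ k : Fin 4, c k • (Pi.single (s k) (1 : ℝ) : QV → ℝ) with hx
  have hinj : ∀ j k : Fin 4, s j = s k ↔ j = k := by decide
  have hxval : ∀ k, x (s k) = c k := by
    intro k
    rw [hx, Finset.sum_apply]
    simp [Pi.single_apply, hinj]
  have hx0 : x ≠ 0 := by
    intro h
    apply hk0
    rw [← hxval k0, h]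
    rfl
  have hBx : B.mulVec x = 0 := by
    have : B.mulVecLin x = 0 := by
      rw [hx, map_sum]
      simp_rw [_root_.map_smul, hbv]
      exact hsum
    simpa [Matrix.mulVecLin_apply] using this
  have hAx : A.mulVec x = 0 := by
    rw [hB, ← Matrix.mulVec_mulVec, hBx, Matrix.mulVec_zero]
  have hsub : {i | x i ≠ 0} ⊆
      (↑({((2 : Fin 4), (0 : Fin 2)), (1, 1), (2, 1), (3, 1)} : Finset QV) : Set QV) := by
    intro i hi
    by_contra hni
    apply hi
    rw [hx, Finset.sum_apply]
    refine Finset.sum_eq_zero fun k _ => ?_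
    have hski : s k ≠ i := by
      intro h
      apply hni
      rw [← h]
      fin_cases k <;> simp [hs]
    simp [Pi.single_apply, Ne.symm hski]
  have hsupp4 : {i | x i ≠ 0}.ncard ≤ 4 := by
    calc {i | x i ≠ 0}.ncard
        ≤ (↑({((2 : Fin 4), (0 : Fin 2)), (1, 1), (2, 1), (3, 1)} : Finset QV) : Set QV).ncard :=
          Set.ncard_le_ncard hsub (Set.toFinite _)
      _ = ({((2 : Fin 4), (0 : Fin 2)), (1, 1), (2, 1), (3, 1)} : Finset QV).card :=
          Set.ncard_coe_finset _
      _ ≤ 4 := by decide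
  have hx4 : {i | x i ≠ 0}.ncard = 4 := le_antisymm hsupp4 (stepB x hx0 hAx)
  -- conclude
  rw [Matrix.spark, if_pos ⟨x, hx0, hAx⟩]
  refine le_antisymm (Nat.sInf_le ⟨x, hx0, hAx, hx4⟩) (le_csInf ⟨4, x, hx0, hAx, hx4⟩ ?_)
  rintro k ⟨y, hy0, hAy, rfl⟩
  exact stepB y hy0 hAy
end

section
/- Let G be a connected simple graph on n vertices and suppose A ∈ S(G) is positive semidefinite with rank(A) = mr₊(G). Then the support of the null space of A is all of V(G); that is, for every vertex i there exists a vector x with Ax = 0 and x_i ≠ 0. -/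
open Matrix
open scoped Classical

/-- a positive semidefinite `A ∈ S(G)` of minimum semidefinite rank has
full null space support. -/
theorem stmt16 {n : ℕ} (G : SimpleGraph (Fin n)) (hconn : G.Connected)
    (A : Matrix (Fin n) (Fin n) ℝ) (hA : SMatrixOf G A) (hpsd : A.PosSemidef)
    (hr : A.rank = mrPlus G) :
    ∀ i : Fin n, ∃ x : Fin n → ℝ, A.mulVec x = 0 ∧ x i ≠ 0 := by
  intro i
  by_contra hcon
  push_neg at hcon
  have happ : ∀ j k, A j k = A k j := fun j k => (hA.1.apply k j)
  -- Step 1: e_i is in the range of A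
  have hex : ∃ y : Fin n → ℝ, A.mulVec y = Pi.single i 1 := by
    by_contra h
    push_neg at h
    have hx : (Pi.single i 1 : Fin n → ℝ) ∉ LinearMap.range A.mulVecLin := by
      rintro ⟨y, hy⟩
      exact h y hy
    obtain ⟨f, hf1, hf2⟩ := Submodule.exists_dual_map_eq_bot_of_notMem hx inferInstance
    set z : Fin n → ℝ := fun j => f (Pi.single j 1) with hz
    have hAz : A.mulVec z = 0 := by
      funext k
      have h1 : A.mulVec (Pi.single k (1:ℝ)) = ∑ j, A k j • (Pi.single j 1 : Fin n → ℝ) := by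
        funext m
        simp [Matrix.mulVec_single, Finset.sum_apply, Pi.single_apply, happ k m]
      have h2 : f (A.mulVec (Pi.single k 1)) = 0 := by
        have hmem : A.mulVec (Pi.single k 1) ∈ LinearMap.range A.mulVecLin :=
          ⟨Pi.single k 1, Matrix.mulVecLin_apply A (Pi.single k 1)⟩
        have := Submodule.mem_map_of_mem (f := f) hmem
        rw [hf2] at this
        simpa using this
      rw [h1, map_sum] at h2
      simp only [_root_.map_smul, smul_eq_mul] at h2
      simpa [Matrix.mulVec, dotProduct, hz] using h2
    exact hf1 (by simpa [hz] using hcon z hAz)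
  obtain ⟨y, hy⟩ := hex
  have hsingle_ne : (Pi.single i 1 : Fin n → ℝ) ≠ 0 := by
    intro h
    have := congrFun h i
    simp at this
  have hquad : y ⬝ᵥ A.mulVec y = y i := by
    rw [hy, dotProduct_single, mul_one]
  have hyi : 0 < y i := by
    rcases lt_or_eq_of_le (by simpa using hpsd.dotProduct_mulVec_nonneg y) with h | h
    · rwa [hquad] at h
    · exfalso
      have h0 : A.mulVec y = 0 :=
        (hpsd.dotProduct_mulVec_zero_iff y).mp (by simpa using h.symm)
      rw [hy] at h0
      exact hsingle_ne h0
  set c := (y i)⁻¹ with hc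
  have hcpos : 0 < c := inv_pos.mpr hyi
  set E : Matrix (Fin n) (Fin n) ℝ := Matrix.vecMulVec (Pi.single i 1) (Pi.single i 1) with hE
  set A' : Matrix (Fin n) (Fin n) ℝ := A - c • E with hA'
  have hEmul : ∀ x : Fin n → ℝ, E.mulVec x = x i • (Pi.single i 1 : Fin n → ℝ) := by
    intro x
    funext a
    simp [hE, Matrix.mulVec, dotProduct, Matrix.vecMulVec_apply, Pi.single_apply,
      mul_ite, ite_mul, zero_mul, mul_zero, mul_comm]
  have hA'mul : ∀ x, A'.mulVec x = A.mulVec x - (c * x i) • (Pi.single i 1 : Fin n → ℝ) := by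
    intro x
    rw [hA', Matrix.sub_mulVec, Matrix.smul_mulVec, hEmul, smul_smul]
  -- A' is in S(G)
  have hA'G : SMatrixOf G A' := by
    constructor
    · show A'ᵀ = A'
      ext a b
      simp [hA', hE, Matrix.vecMulVec_apply, happ b a, mul_comm]
    · intro a b hab
      have hne : E a b = 0 := by
        by_cases ha : a = i
        · by_cases hb : b = i
          · exact absurd (ha.trans hb.symm) hab
          · simp [hE, Matrix.vecMulVec_apply, Pi.single_apply, hb]
        · simp [hE, Matrix.vecMulVec_apply, Pi.single_apply, ha]
      have heq : A' a b = A a b := by simp [hA', hne]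
      rw [heq]
      exact hA.2 a b hab
  -- Cauchy-Schwarz setup
  obtain ⟨B, hB⟩ : ∃ B : Matrix (Fin n) (Fin n) ℝ, A = Bᴴ * B := by
    open scoped MatrixOrder in exact CStarAlgebra.nonneg_iff_eq_star_mul_self.mp hpsd.nonneg
  have hdot : ∀ u v : Fin n → ℝ, u ⬝ᵥ A.mulVec v = (B.mulVec u) ⬝ᵥ (B.mulVec v) := by
    intro u v
    rw [hB, ← Matrix.mulVec_mulVec, Matrix.dotProduct_mulVec]
    congr 1
    rw [Matrix.conjTranspose_eq_transpose_of_trivial, Matrix.vecMul_transpose]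
  have hCS : ∀ x : Fin n → ℝ, (x i)^2 ≤ (x ⬝ᵥ A.mulVec x) * y i := by
    intro x
    have h1 : x i = (B.mulVec x) ⬝ᵥ (B.mulVec y) := by
      rw [← hdot, hy, dotProduct_single, mul_one]
    have h2 : x ⬝ᵥ A.mulVec x = ∑ j, (B.mulVec x j)^2 := by
      rw [hdot]
      simp [dotProduct, pow_two]
    have h3 : y i = ∑ j, (B.mulVec y j)^2 := by
      rw [← hquad, hdot]
      simp [dotProduct, pow_two]
    rw [h1, h2, h3]
    simp only [dotProduct]
    exact Finset.sum_mul_sq_le_sq_mul_sq _ _ _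
  -- A' is positive semidefinite
  have hstar : ∀ x : Fin n → ℝ, star x = x := fun x => funext fun j => star_trivial _
  have hpsd' : A'.PosSemidef := by
    refine Matrix.PosSemidef.of_dotProduct_mulVec_nonneg ?_ ?_
    · show A'ᴴ = A'
      rw [Matrix.conjTranspose_eq_transpose_of_trivial]
      exact hA'G.1
    · intro x
      rw [hstar x]
      have hval : x ⬝ᵥ A'.mulVec x = x ⬝ᵥ A.mulVec x - c * (x i)^2 := by
        rw [hA'mul x, dotProduct_sub, dotProduct_smul,
          dotProduct_single, mul_one, smul_eq_mul]
        ring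
      rw [hval]
      have h4 := mul_le_mul_of_nonneg_right (hCS x) (le_of_lt hcpos)
      have h5 : (x ⬝ᵥ A.mulVec x) * y i * c = x ⬝ᵥ A.mulVec x := by
        rw [mul_assoc, hc, mul_inv_cancel₀ (ne_of_gt hyi), mul_one]
      nlinarith [h4, h5]
  -- A' has strictly smaller rank
  have hkerle : LinearMap.ker A.mulVecLin ≤ LinearMap.ker A'.mulVecLin := by
    intro x hx
    rw [LinearMap.mem_ker, Matrix.mulVecLin_apply] at *
    have hxi := hcon x hx
    rw [hA'mul x, hx, hxi]
    simp
  have hymem : y ∈ LinearMap.ker A'.mulVecLin := by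
    rw [LinearMap.mem_ker, Matrix.mulVecLin_apply, hA'mul y, hy, hc,
      inv_mul_cancel₀ (ne_of_gt hyi), one_smul, sub_self]
  have hynmem : y ∉ LinearMap.ker A.mulVecLin := by
    rw [LinearMap.mem_ker, Matrix.mulVecLin_apply, hy]
    exact hsingle_ne
  have hlt : LinearMap.ker A.mulVecLin < LinearMap.ker A'.mulVecLin :=
    lt_of_le_of_ne hkerle (fun h => hynmem (h ▸ hymem))
  have hdim : Module.finrank ℝ (LinearMap.ker A.mulVecLin)
      < Module.finrank ℝ (LinearMap.ker A'.mulVecLin) :=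
    Submodule.finrank_lt_finrank_of_lt hlt
  have hr1 := LinearMap.finrank_range_add_finrank_ker A.mulVecLin
  have hr2 := LinearMap.finrank_range_add_finrank_ker A'.mulVecLin
  have hrank : A'.rank < A.rank := by
    unfold Matrix.rank
    omega
  have hle : mrPlus G ≤ A'.rank := Nat.sInf_le ⟨A', hA'G, hpsd', rfl⟩
  omega
end

section
/- Let T be a tree on n vertices and let A ∈ S(T) be singular. Then the following are equivalent: (1) spark(A) = rank(A) + 1; (2) for every vertex i of T there exists a vector x with Ax = 0 and x_i ≠ 0; (3) A has no Parter vertex, i.e., there is no vertex v with nullity(A(v)) = nullity(A) + 1, where A(v) is the principal submatrix of A obtained by deleting the row and column indexed by v. -/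
open Matrix
open scoped Classical

namespace Stmt17Aux
variable {n : ℕ}

/-- extension by zero at `v` -/
noncomputable def extvL (v : Fin n) : ({w : Fin n // w ≠ v} → ℝ) →ₗ[ℝ] (Fin n → ℝ) where
  toFun y := fun i => if h : i = v then 0 else y ⟨i, h⟩
  map_add' a b := by funext i; by_cases h : i = v <;> simp [h]
  map_smul' c a := by funext i; by_cases h : i = v <;> simp [h]

lemma extvL_apply_ne (v : Fin n) (y : {w : Fin n // w ≠ v} → ℝ) {i : Fin n} (h : i ≠ v) :
    extvL v y i = y ⟨i, h⟩ := dif_neg h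

lemma extvL_apply_v (v : Fin n) (y : {w : Fin n // w ≠ v} → ℝ) :
    extvL v y v = 0 := dif_pos rfl

lemma sum_split (v : Fin n) (f : Fin n → ℝ) :
    ∑ j, f j = f v + ∑ j : {w : Fin n // w ≠ v}, f j.val := by
  rw [← Finset.add_sum_erase _ f (Finset.mem_univ v)]
  congr 1
  exact Finset.sum_subtype _ (fun x => by simp [Finset.mem_erase]) f

lemma mulVec_extv (A : Matrix (Fin n) (Fin n) ℝ) (v : Fin n) (y : {w : Fin n // w ≠ v} → ℝ)
    (i : {w : Fin n // w ≠ v}) :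
    (A *ᵥ extvL v y) i.val = ((A.submatrix (Subtype.val : {w : Fin n // w ≠ v} → Fin n) Subtype.val) *ᵥ y) i := by
  show ∑ j, A i.val j * extvL v y j = ∑ j : {w : Fin n // w ≠ v}, A i.val j.val * y j
  rw [sum_split v (fun j => A i.val j * extvL v y j), extvL_apply_v, mul_zero, zero_add]
  refine Finset.sum_congr rfl fun j _ => ?_
  rw [extvL_apply_ne v y j.2]

lemma mulVec_extv_v (A : Matrix (Fin n) (Fin n) ℝ) (v : Fin n) (y : {w : Fin n // w ≠ v} → ℝ) :
    (A *ᵥ extvL v y) v = ∑ j : {w : Fin n // w ≠ v}, A v j.val * y j := by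
  show ∑ j, A v j * extvL v y j = _
  rw [sum_split v (fun j => A v j * extvL v y j), extvL_apply_v, mul_zero, zero_add]
  refine Finset.sum_congr rfl fun j _ => ?_
  rw [extvL_apply_ne v y j.2]

lemma pairing (A : Matrix (Fin n) (Fin n) ℝ) (hsym : A.IsSymm) (v : Fin n)
    (x : Fin n → ℝ) (hx : A *ᵥ x = 0)
    (y : {w : Fin n // w ≠ v} → ℝ)
    (hy : (A.submatrix (Subtype.val : {w : Fin n // w ≠ v} → Fin n) Subtype.val) *ᵥ y = 0) :
    (A *ᵥ extvL v y) v * x v = 0 := by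
  have h1 : (A *ᵥ extvL v y) ⬝ᵥ x = 0 := by
    rw [dotProduct_comm, dotProduct_mulVec, ← hsym, vecMul_transpose, hx]
    simp [dotProduct]
  rw [← h1]
  show _ = ∑ i, (A *ᵥ extvL v y) i * x i
  rw [sum_split v (fun i => (A *ᵥ extvL v y) i * x i)]
  have : ∀ j : {w : Fin n // w ≠ v}, (A *ᵥ extvL v y) j.val * x j.val = 0 := by
    intro j
    rw [mulVec_extv, hy]
    simp
  rw [Finset.sum_congr rfl (fun j _ => this j), Finset.sum_const_zero, add_zero]


lemma extvL_injective (v : Fin n) : Function.Injective (extvL v) := by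
  intro a b h
  funext j
  have := congrFun h j.val
  rwa [extvL_apply_ne v _ j.2, extvL_apply_ne v _ j.2] at this

lemma ext_coords (A : Matrix (Fin n) (Fin n) ℝ) (v : Fin n) {z : {w : Fin n // w ≠ v} → ℝ}
    (hz : (A.submatrix (Subtype.val : {w : Fin n // w ≠ v} → Fin n) Subtype.val) *ᵥ z = 0)
    {i : Fin n} (hi : i ≠ v) : (A *ᵥ extvL v z) i = 0 := by
  have h2 := mulVec_extv A v z ⟨i, hi⟩
  rw [hz] at h2
  simpa using h2

lemma mem_map_extvL (A : Matrix (Fin n) (Fin n) ℝ) (v : Fin n) {x : Fin n → ℝ}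
    (hx : A *ᵥ x = 0) (hxv : x v = 0) :
    x ∈ Submodule.map (extvL v)
      (LinearMap.ker (A.submatrix (Subtype.val : {w : Fin n // w ≠ v} → Fin n) Subtype.val).mulVecLin) := by
  set y : {w : Fin n // w ≠ v} → ℝ := fun j => x j.val with hy
  have hext : extvL v y = x := by
    funext i
    by_cases h : i = v
    · subst h; rw [extvL_apply_v, hxv]
    · rw [extvL_apply_ne v _ h]
  refine ⟨y, ?_, hext⟩
  simp only [SetLike.mem_coe]
  rw [LinearMap.mem_ker, Matrix.mulVecLin_apply]
  funext j
  rw [← mulVec_extv A v y j, hext, hx]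
  rfl

lemma map_extvL_finrank (A : Matrix (Fin n) (Fin n) ℝ) (v : Fin n) :
    Module.finrank ℝ (Submodule.map (extvL v)
      (LinearMap.ker (A.submatrix (Subtype.val : {w : Fin n // w ≠ v} → Fin n) Subtype.val).mulVecLin))
      = _root_.nullity (A.submatrix (Subtype.val : {w : Fin n // w ≠ v} → Fin n) Subtype.val) :=
  ((Submodule.equivMapOfInjective _ (extvL_injective v) _).finrank_eq).symm

lemma inf_span_eq_bot {M : Type*} [AddCommGroup M] [Module ℝ M] (s : Submodule ℝ M)
    {e : M} (he : e ∉ s) : s ⊓ Submodule.span ℝ {e} = ⊥ :=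
  disjoint_iff.mp (Submodule.disjoint_span_singleton.mpr (fun h => absurd h he))

lemma parter_up (A : Matrix (Fin n) (Fin n) ℝ) (hsym : A.IsSymm) (v : Fin n)
    (y : {w : Fin n // w ≠ v} → ℝ)
    (hy : (A.submatrix (Subtype.val : {w : Fin n // w ≠ v} → Fin n) Subtype.val) *ᵥ y = 0)
    (hc : (A *ᵥ extvL v y) v ≠ 0) :
    _root_.nullity (A.submatrix (Subtype.val : {w : Fin n // w ≠ v} → Fin n) Subtype.val)
      = _root_.nullity A + 1 := by
  classical
  let B : Matrix {w : Fin n // w ≠ v} {w : Fin n // w ≠ v} ℝ :=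
    A.submatrix (Subtype.val : {w : Fin n // w ≠ v} → Fin n) Subtype.val
  let K : Submodule ℝ (Fin n → ℝ) := LinearMap.ker A.mulVecLin
  let W : Submodule ℝ (Fin n → ℝ) := Submodule.map (extvL v) (LinearMap.ker B.mulVecLin)
  let e : Fin n → ℝ := extvL v y
  have hymem : y ∈ LinearMap.ker B.mulVecLin := by
    rw [LinearMap.mem_ker, Matrix.mulVecLin_apply]; exact hy
  have heW : e ∈ W := ⟨y, hymem, rfl⟩
  have heK : e ∉ K := by
    intro h
    rw [LinearMap.mem_ker, Matrix.mulVecLin_apply] at h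
    exact hc (by rw [h]; rfl)
  have hKW : K ≤ W := by
    intro x hx
    rw [LinearMap.mem_ker, Matrix.mulVecLin_apply] at hx
    have hxv : x v = 0 :=
      (mul_eq_zero.1 (pairing A hsym v x hx y hy)).resolve_left hc
    exact mem_map_extvL A v hx hxv
  have hW : W = K ⊔ Submodule.span ℝ {e} := by
    apply le_antisymm
    · intro w hw
      obtain ⟨z, hz, rfl⟩ := hw
      simp only [SetLike.mem_coe] at hz
      rw [LinearMap.mem_ker, Matrix.mulVecLin_apply] at hz
      set t : ℝ := (A *ᵥ extvL v z) v / (A *ᵥ e) v with ht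
      have hK' : extvL v z - t • e ∈ K := by
        rw [LinearMap.mem_ker, Matrix.mulVecLin_apply]
        funext i
        rw [Matrix.mulVec_sub, Matrix.mulVec_smul]
        by_cases h : i = v
        · subst h
          simp only [Pi.sub_apply, Pi.smul_apply, smul_eq_mul, Pi.zero_apply, ht]
          field_simp
          rw [div_self (show (A *ᵥ e) i ≠ 0 from hc), sub_self, mul_zero]
        · have h1 : (A *ᵥ extvL v z) i = 0 := ext_coords A v hz h
          have h2 : (A *ᵥ e) i = 0 := ext_coords A v hy h
          simp [h1, h2]
      have : extvL v z = (extvL v z - t • e) + t • e := by abel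
      rw [this]
      exact Submodule.add_mem _ (Submodule.mem_sup_left hK')
        (Submodule.mem_sup_right (Submodule.smul_mem _ t (Submodule.mem_span_singleton_self e)))
    · exact sup_le hKW (Submodule.span_le.2 (by simpa using heW))
  have hdim := Submodule.finrank_sup_add_finrank_inf_eq K (Submodule.span ℝ {e})
  rw [inf_span_eq_bot K heK] at hdim
  have hse : e ≠ 0 := fun h => heK (h ▸ K.zero_mem)
  rw [finrank_span_singleton hse, finrank_bot, add_zero] at hdim
  have h1 : Module.finrank ℝ W = _root_.nullity B := map_extvL_finrank A v
  rw [hW] at h1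
  show _root_.nullity B = _root_.nullity A + 1
  rw [← h1, hdim]
  rfl

lemma parter_down (A : Matrix (Fin n) (Fin n) ℝ) (hsym : A.IsSymm) (v : Fin n)
    (x : Fin n → ℝ) (hx : A *ᵥ x = 0) (hxv : x v ≠ 0) :
    _root_.nullity A =
      _root_.nullity (A.submatrix (Subtype.val : {w : Fin n // w ≠ v} → Fin n) Subtype.val) + 1 := by
  classical
  let B : Matrix {w : Fin n // w ≠ v} {w : Fin n // w ≠ v} ℝ :=
    A.submatrix (Subtype.val : {w : Fin n // w ≠ v} → Fin n) Subtype.val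
  let K : Submodule ℝ (Fin n → ℝ) := LinearMap.ker A.mulVecLin
  let W : Submodule ℝ (Fin n → ℝ) := Submodule.map (extvL v) (LinearMap.ker B.mulVecLin)
  have hWv : ∀ w ∈ W, w v = (0:ℝ) := by
    rintro w ⟨z, hz, rfl⟩
    exact extvL_apply_v v z
  have hxW : x ∉ W := fun h => hxv (hWv x h)
  have hWK : W ≤ K := by
    rintro w ⟨z, hz, rfl⟩
    simp only [SetLike.mem_coe] at hz
    rw [LinearMap.mem_ker, Matrix.mulVecLin_apply] at hz
    rw [LinearMap.mem_ker, Matrix.mulVecLin_apply]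
    funext i
    by_cases h : i = v
    · rw [h]
      simpa using (mul_eq_zero.1 (pairing A hsym v x hx z hz)).resolve_right hxv
    · simpa using ext_coords A v hz h
  have hxK : x ∈ K := by rw [LinearMap.mem_ker, Matrix.mulVecLin_apply]; exact hx
  have hK : K = W ⊔ Submodule.span ℝ {x} := by
    apply le_antisymm
    · intro k hk
      have hk' : A *ᵥ k = 0 := by
        rw [LinearMap.mem_ker, Matrix.mulVecLin_apply] at hk; exact hk
      set t : ℝ := k v / x v with ht
      have h1 : A *ᵥ (k - t • x) = 0 := by
        rw [Matrix.mulVec_sub, Matrix.mulVec_smul, hk', hx]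
        simp
      have h2 : (k - t • x) v = 0 := by
        simp only [Pi.sub_apply, Pi.smul_apply, smul_eq_mul, ht]
        field_simp
        ring
      have h3 : k - t • x ∈ W := mem_map_extvL A v h1 h2
      have : k = (k - t • x) + t • x := by abel
      rw [this]
      exact Submodule.add_mem _ (Submodule.mem_sup_left h3)
        (Submodule.mem_sup_right (Submodule.smul_mem _ t (Submodule.mem_span_singleton_self x)))
    · exact sup_le hWK (Submodule.span_le.2 (by simpa using hxK))
  have hdim := Submodule.finrank_sup_add_finrank_inf_eq W (Submodule.span ℝ {x})
  rw [inf_span_eq_bot W hxW] at hdim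
  have hse : x ≠ 0 := fun h => hxv (by rw [h]; rfl)
  rw [finrank_span_singleton hse, finrank_bot, add_zero] at hdim
  have h1 : Module.finrank ℝ W = _root_.nullity B := map_extvL_finrank A v
  show _root_.nullity A = _root_.nullity B + 1
  rw [← h1]
  rw [← hdim, ← hK]
  rfl


lemma walk_cross {V : Type*} {G : SimpleGraph V} {x : V → ℝ} :
    ∀ {a b : V}, G.Walk a b → x a = 0 → x b ≠ 0 → ∃ s t, G.Adj s t ∧ x s = 0 ∧ x t ≠ 0 := by
  intro a b p
  induction p with
  | nil => exact fun ha hb => absurd ha hb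
  | @cons a c b h p ih =>
    intro ha hb
    by_cases hc : x c = 0
    · exact ih hc hb
    · exact ⟨a, c, h, ha, hc⟩

lemma unique_nbr {V : Type*} {G : SimpleGraph V} (hT : G.IsTree) {v b₁ b₂ : V}
    (h1 : G.Adj v b₁) (h2 : G.Adj v b₂)
    (hr : (G.induce {w | w ≠ v}).Reachable ⟨b₁, h1.ne'⟩ ⟨b₂, h2.ne'⟩) : b₁ = b₂ := by
  classical
  obtain ⟨q⟩ := hr
  let p := q.toPath
  let emb : G.induce {w | w ≠ v} ↪g G := SimpleGraph.Embedding.induce {w | w ≠ v}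
  let pw : (G.induce {w | w ≠ v}).Walk ⟨b₁, h1.ne'⟩ ⟨b₂, h2.ne'⟩ := p.1
  let p' : G.Walk b₁ b₂ := pw.map emb.toHom
  have hp' : p'.IsPath := SimpleGraph.Walk.map_isPath_of_injective emb.injective p.2
  have hvp' : v ∉ p'.support := by
    intro hv
    rw [show p'.support = (pw.map emb.toHom).support from rfl, SimpleGraph.Walk.support_map] at hv
    obtain ⟨z, hz, hz2⟩ := List.mem_map.1 hv
    exact z.2 hz2
  have hW1 : (SimpleGraph.Walk.cons h1 p').IsPath := hp'.cons hvp'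
  have hW2 : (SimpleGraph.Walk.cons h2 (SimpleGraph.Walk.nil : G.Walk b₂ b₂)).IsPath := by
    simp [SimpleGraph.Walk.isPath_iff_eq_nil, h2.ne]
  obtain ⟨P, hP, huniq⟩ := hT.existsUnique_path v b₂
  have hEq : SimpleGraph.Walk.cons h1 p' = SimpleGraph.Walk.cons h2 SimpleGraph.Walk.nil :=
    (huniq _ hW1).trans (huniq _ hW2).symm
  have hsup := congrArg SimpleGraph.Walk.support hEq
  rw [SimpleGraph.Walk.support_cons, SimpleGraph.Walk.support_cons,
    SimpleGraph.Walk.support_nil] at hsup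
  have hsup2 : p'.support = [b₂] := by simpa using hsup
  have hcons := p'.support_eq_cons
  rw [hsup2] at hcons
  exact (List.cons.inj hcons).1.symm

end Stmt17Aux

/-- for a singular matrix of a tree, full spark, full null space support,
and having no Parter vertex are equivalent. -/
theorem stmt17 {n : ℕ} (G : SimpleGraph (Fin n)) (hT : G.IsTree)
    (A : Matrix (Fin n) (Fin n) ℝ) (hA : SMatrixOf G A) (hsing : A.det = 0) :
    ((A.spark = A.rank + 1) ↔ (∀ i : Fin n, ∃ x : Fin n → ℝ, A.mulVec x = 0 ∧ x i ≠ 0)) ∧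
    ((∀ i : Fin n, ∃ x : Fin n → ℝ, A.mulVec x = 0 ∧ x i ≠ 0) ↔
      ¬ ∃ v : Fin n,
        nullity (A.submatrix (Subtype.val : {w : Fin n // w ≠ v} → Fin n) Subtype.val) =
          nullity A + 1) := by
  classical
  obtain ⟨x₀, hx₀ne, hx₀⟩ : ∃ x : Fin n → ℝ, x ≠ 0 ∧ A *ᵥ x = 0 := by
    obtain ⟨w, hw, h⟩ := (Matrix.exists_mulVec_eq_zero_iff).mpr hsing
    exact ⟨w, hw, h⟩
  have hsym : A.IsSymm := hA.1
  have hx₀mem : x₀ ∈ LinearMap.ker A.mulVecLin := by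
    rw [LinearMap.mem_ker, Matrix.mulVecLin_apply]; exact hx₀
  have hnull_pos : 1 ≤ nullity A := by
    haveI : Nontrivial ↥(LinearMap.ker A.mulVecLin) :=
      ⟨⟨x₀, hx₀mem⟩, 0, by simp [Subtype.ext_iff, hx₀ne]⟩
    exact Module.finrank_pos
  have hrk : A.rank + nullity A = n := by
    have h := LinearMap.finrank_range_add_finrank_ker A.mulVecLin
    rwa [Module.finrank_fin_fun] at h
  -- (2) → (3)
  have h23 : (∀ i : Fin n, ∃ x : Fin n → ℝ, A.mulVec x = 0 ∧ x i ≠ 0) →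
      ¬ ∃ v : Fin n,
        nullity (A.submatrix (Subtype.val : {w : Fin n // w ≠ v} → Fin n) Subtype.val) =
          nullity A + 1 := by
    rintro h2 ⟨v, hv⟩
    obtain ⟨x, hx, hxv⟩ := h2 v
    have := Stmt17Aux.parter_down A hsym v x hx hxv
    omega
  -- (3) → full support of every nonzero null vector
  have h3fs : (¬ ∃ v : Fin n,
        nullity (A.submatrix (Subtype.val : {w : Fin n // w ≠ v} → Fin n) Subtype.val) =
          nullity A + 1) →
      ∀ x : Fin n → ℝ, A *ᵥ x = 0 → x ≠ 0 → ∀ i : Fin n, x i ≠ 0 := by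
    intro h3 x hx hxne i
    by_contra hxi0
    obtain ⟨u0, hu0⟩ := Function.ne_iff.1 hxne
    have hu0' : x u0 ≠ 0 := by simpa using hu0
    obtain ⟨pw⟩ := hT.isConnected.preconnected i u0
    obtain ⟨v, t, hadj, hxv, hxt⟩ := Stmt17Aux.walk_cross pw hxi0 hu0'
    have htv : t ≠ v := hadj.ne'
    set C : Set (Fin n) :=
      {b | ∃ hb : b ≠ v, (G.induce {w | w ≠ v}).Reachable ⟨t, htv⟩ ⟨b, hb⟩} with hC
    have hCt : t ∈ C := ⟨htv, SimpleGraph.Reachable.refl _⟩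
    have hcl : ∀ a ∈ C, ∀ b, G.Adj a b → b ≠ v → b ∈ C := by
      rintro a ⟨hav, hra⟩ b hab hbv
      refine ⟨hbv, hra.trans (SimpleGraph.Adj.reachable ?_)⟩
      exact hab
    have huniq : ∀ b, b ∈ C → G.Adj v b → b = t := by
      rintro b ⟨hbv, hrb⟩ hvb
      exact (Stmt17Aux.unique_nbr hT hadj hvb hrb).symm
    have hsep : ∀ a b : Fin n, a ∈ C → b ∉ C → b ≠ v → A a b = 0 := by
      intro a b haC hbC hbv
      by_contra hab
      have hne : a ≠ b := fun h => hbC (h ▸ haC)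
      exact hbC (hcl a haC b ((hA.2 a b hne).1 hab) hbv)
    have hsep' : ∀ a b : Fin n, a ∉ C → a ≠ v → b ∈ C → A a b = 0 := by
      intro a b haC hav hbC
      by_contra hab
      have hne : a ≠ b := fun h => haC (h ▸ hbC)
      exact haC (hcl b hbC a ((hA.2 a b hne).1 hab).symm hav)
    set y : {w : Fin n // w ≠ v} → ℝ := fun b => if b.val ∈ C then x b.val else 0 with hy
    have hyker :
        (A.submatrix (Subtype.val : {w : Fin n // w ≠ v} → Fin n) Subtype.val) *ᵥ y = 0 := by
      funext a
      show ∑ j : {w : Fin n // w ≠ v}, A a.val j.val * y j = 0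
      by_cases haC : a.val ∈ C
      · have hterm : ∀ j : {w : Fin n // w ≠ v},
            A a.val j.val * y j = A a.val j.val * x j.val := by
          intro j
          by_cases hjC : j.val ∈ C
          · simp [hy, hjC]
          · rw [hsep a.val j.val haC hjC j.2]
            simp [hy, hjC]
        rw [Finset.sum_congr rfl (fun j _ => hterm j)]
        have hsplit := Stmt17Aux.sum_split v (fun j => A a.val j * x j)
        have hAx : ∑ j, A a.val j * x j = 0 := by
          have := congrFun hx a.val
          simpa [Matrix.mulVec, dotProduct] using this
        rw [hAx, hxv, mul_zero, zero_add] at hsplit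
        exact hsplit.symm
      · refine Finset.sum_eq_zero fun j _ => ?_
        by_cases hjC : j.val ∈ C
        · rw [hsep' a.val j.val haC a.2 hjC, zero_mul]
        · simp [hy, hjC]
    have hcne : (A *ᵥ Stmt17Aux.extvL v y) v ≠ 0 := by
      rw [Stmt17Aux.mulVec_extv_v]
      have hsum : ∑ j : {w : Fin n // w ≠ v}, A v j.val * y j = A v t * x t := by
        rw [Finset.sum_eq_single (⟨t, htv⟩ : {w : Fin n // w ≠ v})]
        · simp [hy, hCt]
        · intro j _ hjne
          by_cases hjC : j.val ∈ C
          · have hz : A v j.val = 0 := by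
              by_contra hnz
              have hvj : v ≠ j.val := fun h => j.2 h.symm
              have hadj2 : G.Adj v j.val := (hA.2 v j.val hvj).1 hnz
              exact hjne (Subtype.ext (huniq j.val hjC hadj2))
            rw [hz, zero_mul]
          · simp [hy, hjC]
        · intro h; exact absurd (Finset.mem_univ _) h
      rw [hsum]
      exact mul_ne_zero ((hA.2 v t hadj.ne).2 hadj) hxt
    exact h3 ⟨v, Stmt17Aux.parter_up A hsym v y hyker hcne⟩
  -- (3) → (2)
  have h32 : (¬ ∃ v : Fin n,
        nullity (A.submatrix (Subtype.val : {w : Fin n // w ≠ v} → Fin n) Subtype.val) =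
          nullity A + 1) →
      (∀ i : Fin n, ∃ x : Fin n → ℝ, A.mulVec x = 0 ∧ x i ≠ 0) :=
    fun h3 i => ⟨x₀, hx₀, h3fs h3 x₀ hx₀ hx₀ne i⟩
  -- (1) → (2)
  have h12 : A.spark = A.rank + 1 →
      (∀ i : Fin n, ∃ x : Fin n → ℝ, A.mulVec x = 0 ∧ x i ≠ 0) := by
    intro h1
    by_contra h2
    push_neg at h2
    obtain ⟨i, hi⟩ := h2
    have hdn : nullity A ≤ n := by omega
    have hcard : nullity A - 1 ≤ (Finset.univ.erase i).card := by
      rw [Finset.card_erase_of_mem (Finset.mem_univ i), Finset.card_univ, Fintype.card_fin]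
      omega
    obtain ⟨F, hFsub, hFcard⟩ := Finset.exists_subset_card_eq hcard
    let ev : ↥(LinearMap.ker A.mulVecLin) →ₗ[ℝ] (↥F → ℝ) :=
      LinearMap.pi (fun j => (LinearMap.proj (j : Fin n) :
        (Fin n → ℝ) →ₗ[ℝ] ℝ).comp (LinearMap.ker A.mulVecLin).subtype)
    have hnotinj : ¬ Function.Injective ev := by
      intro hinj
      have hle := LinearMap.finrank_le_finrank_of_injective hinj
      rw [Module.finrank_pi, Fintype.card_coe, hFcard] at hle
      have : nullity A ≤ nullity A - 1 := hle
      omega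
    obtain ⟨a, b, hab, habne⟩ := Function.not_injective_iff.1 hnotinj
    set z := a - b with hz
    have hzne : z ≠ 0 := sub_ne_zero.2 habne
    have hevz : ev z = 0 := by rw [hz, map_sub, hab, sub_self]
    set w : Fin n → ℝ := (z : Fin n → ℝ) with hw
    have hwker : A *ᵥ w = 0 := by
      have := z.2
      rw [LinearMap.mem_ker, Matrix.mulVecLin_apply] at this
      exact this
    have hwne : w ≠ 0 := by
      intro h
      exact hzne (Subtype.ext h)
    have hwF : ∀ j ∈ F, w j = 0 := by
      intro j hj
      exact congrFun hevz ⟨j, hj⟩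
    have hwi : w i = 0 := hi w hwker
    have hiF : i ∉ F := by
      intro h
      exact (Finset.mem_erase.1 (hFsub h)).1 rfl
    have hTcard : (insert i F).card = nullity A := by
      rw [Finset.card_insert_of_notMem hiF, hFcard]
      omega
    have hsupp : {j | w j ≠ 0} ⊆ ↑((insert i F)ᶜ) := by
      intro j hj
      simp only [Finset.coe_compl, Set.mem_compl_iff, Finset.mem_coe, Finset.mem_insert]
      rintro (rfl | hjF)
      · exact hj hwi
      · exact hj (hwF j hjF)
    have hncard : {j | w j ≠ 0}.ncard ≤ n - nullity A := by
      calc {j | w j ≠ 0}.ncard ≤ (↑((insert i F)ᶜ) : Set (Fin n)).ncard :=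
            Set.ncard_le_ncard hsupp (Set.toFinite _)
        _ = ((insert i F)ᶜ).card := Set.ncard_coe_finset _
        _ = Fintype.card (Fin n) - (insert i F).card := Finset.card_compl _
        _ = n - nullity A := by rw [Fintype.card_fin, hTcard]
    have hmem : {j | w j ≠ 0}.ncard ∈
        {k | ∃ x : Fin n → ℝ, x ≠ 0 ∧ A.mulVec x = 0 ∧ {i | x i ≠ 0}.ncard = k} :=
      ⟨w, hwne, hwker, rfl⟩
    have hsp : A.spark ≤ {j | w j ≠ 0}.ncard := by
      rw [Matrix.spark, if_pos ⟨x₀, hx₀ne, hx₀⟩]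
      exact Nat.sInf_le hmem
    rw [h1] at hsp
    omega
  -- (2) → (1)
  have h21 : (∀ i : Fin n, ∃ x : Fin n → ℝ, A.mulVec x = 0 ∧ x i ≠ 0) →
      A.spark = A.rank + 1 := by
    intro h2
    have hfs := h3fs (h23 h2)
    have hone : nullity A = 1 := by
      have hker : LinearMap.ker A.mulVecLin = Submodule.span ℝ {x₀} := by
        apply le_antisymm
        · intro z hz
          have hz' : A *ᵥ z = 0 := by
            rw [LinearMap.mem_ker, Matrix.mulVecLin_apply] at hz; exact hz
          have hi0 : Nonempty (Fin n) := hT.isConnected.nonempty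
          obtain ⟨i₀⟩ := hi0
          have hx0i : x₀ i₀ ≠ 0 := hfs x₀ hx₀ hx₀ne i₀
          set c : ℝ := z i₀ / x₀ i₀ with hc
          have hzc : z - c • x₀ = 0 := by
            by_contra hne
            have h0 : A *ᵥ (z - c • x₀) = 0 := by
              rw [Matrix.mulVec_sub, Matrix.mulVec_smul, hz', hx₀]; simp
            refine hfs _ h0 hne i₀ ?_
            simp only [Pi.sub_apply, Pi.smul_apply, smul_eq_mul, hc]
            field_simp
            ring
          have hzz : z = c • x₀ := by rwa [sub_eq_zero] at hzc
          rw [hzz]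
          exact Submodule.smul_mem _ _ (Submodule.mem_span_singleton_self x₀)
        · rw [Submodule.span_le]
          simpa using hx₀mem
      show Module.finrank ℝ (LinearMap.ker A.mulVecLin) = 1
      rw [hker]
      exact finrank_span_singleton hx₀ne
    have hspset : {k | ∃ x : Fin n → ℝ, x ≠ 0 ∧ A.mulVec x = 0 ∧ {i | x i ≠ 0}.ncard = k}
        = {n} := by
      apply Set.eq_singleton_iff_unique_mem.mpr
      constructor
      · refine ⟨x₀, hx₀ne, hx₀, ?_⟩
        have huniv : {i | x₀ i ≠ 0} = Set.univ :=
          Set.eq_univ_of_forall (fun i => hfs x₀ hx₀ hx₀ne i)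
        rw [huniv, Set.ncard_univ, Nat.card_eq_fintype_card, Fintype.card_fin]
      · rintro k ⟨x, hxne, hx, rfl⟩
        have huniv : {i | x i ≠ 0} = Set.univ :=
          Set.eq_univ_of_forall (fun i => hfs x hx hxne i)
        rw [huniv, Set.ncard_univ, Nat.card_eq_fintype_card, Fintype.card_fin]
    have hsp : A.spark = n := by
      rw [Matrix.spark, if_pos ⟨x₀, hx₀ne, hx₀⟩, hspset, csInf_singleton]
    rw [hsp]
    omega
  exact ⟨⟨h12, h21⟩, ⟨h23, h32⟩⟩
end
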